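/- arXiv:2112.14676 — 8 statements merged into one kernel-verified Lean document; each statement's English description precedes it below -/
import Mathlib

section
/- For every continuous function f : ℝ^n × ℝ^l → ℝ there exist smooth (C^∞) functions a : ℝ^n → ℝ and b : ℝ^l → ℝ with a(x) ≥ 0 and b(d) ≥ 0 for all x, d, such that |f(x,d)| ≤ a(x)·b(d) for all x ∈ ℝ^n and d ∈ ℝ^l. -/
set_option maxHeartbeats 1000000

open Set Metric FormalMultilinearSeries
open scoped NNReal

/-- Any monotone sequence of reals `≥ 1` is dominated by a real-analytic (entire)
function: `M ⌊t⌋₊ ≤ g t` for `t ≥ 0`. -/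
lemma exists_entire_majorant (M : ℕ → ℝ) (hM : Monotone M) (hM1 : ∀ k, 1 ≤ M k) :
    ∃ g : ℝ → ℝ, ContDiff ℝ (⊤ : ℕ∞) g ∧ ∀ t : ℝ, 0 ≤ t → M ⌊t⌋₊ ≤ g t := by
  classical
  set P : ℕ → ℕ := fun k => Nat.clog 2 (⌈M k⌉₊ + 1) with hP
  set N : ℕ → ℕ := fun k => k + P k + 1 with hN
  have hMP : ∀ k, M k ≤ 2 ^ N k := by
    intro k
    have h1 : (⌈M k⌉₊ + 1 : ℕ) ≤ 2 ^ P k := Nat.le_pow_clog one_lt_two _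
    have h2 : M k ≤ ⌈M k⌉₊ := Nat.le_ceil _
    have h3 : (2:ℝ) ^ P k ≤ 2 ^ N k := by
      apply pow_le_pow_right₀ one_le_two
      simp only [hN]; omega
    calc M k ≤ (⌈M k⌉₊ : ℝ) := h2
      _ ≤ ((⌈M k⌉₊ + 1 : ℕ) : ℝ) := by push_cast; linarith
      _ ≤ ((2 ^ P k : ℕ) : ℝ) := by exact_mod_cast h1
      _ = (2:ℝ) ^ P k := by push_cast; ring
      _ ≤ _ := h3
  have hNmono : StrictMono N := strictMono_nat_of_lt_succ fun k => by
    have h1 : ⌈M k⌉₊ + 1 ≤ ⌈M (k+1)⌉₊ + 1 := by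
      have := Nat.ceil_le_ceil (R := ℝ) (hM (by omega : k ≤ k + 1)); omega
    have h2 : P k ≤ P (k+1) := Nat.clog_mono_right 2 h1
    simp only [hN]; omega
  have hN1 : ∀ k, 1 ≤ N k := fun k => by simp only [hN]; omega
  set c : ℕ → ℝ := fun j => if j = 0 then M 0 else
      Function.extend N (fun k => M k / (k:ℝ) ^ N k) 0 j with hc
  have hc0 : c 0 = M 0 := if_pos rfl
  have hcN : ∀ k, c (N k) = M k / (k:ℝ) ^ N k := by
    intro k
    have hne : N k ≠ 0 := by have := hN1 k; omega
    simp only [hc, if_neg hne, hNmono.injective.extend_apply]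
  have hcnonneg : ∀ j, 0 ≤ c j := by
    intro j
    simp only [hc]
    split
    · linarith [hM1 0]
    · rw [Function.extend_def]
      split
      · exact div_nonneg (le_trans zero_le_one (hM1 _)) (by positivity)
      · simp
  set p := ofScalars ℝ c with hp
  have hpnorm : ∀ j, ‖p j‖ = c j := fun j => by
    rw [hp, ofScalars_norm, Real.norm_eq_abs, abs_of_nonneg (hcnonneg j)]
  have hradius : p.radius = ⊤ := by
    rw [eq_top_iff]
    refine ENNReal.le_of_forall_nnreal_lt fun r _ => ?_
    set k₀ : ℕ := ⌈2 * (r:ℝ)⌉₊ + 1 with hk0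
    have hsumnn : (0:ℝ) ≤ ∑ k ∈ Finset.range k₀, M k * (r:ℝ) ^ N k :=
      Finset.sum_nonneg fun k _ => mul_nonneg (by linarith [hM1 k]) (by positivity)
    refine p.le_radius_of_bound (M 0 + (∑ k ∈ Finset.range k₀, M k * (r:ℝ) ^ N k) + 1)
      fun j => ?_
    rw [hpnorm]
    rcases eq_or_ne j 0 with rfl | hj
    · rw [hc0]; simp only [pow_zero, mul_one]; linarith
    · by_cases hrange : ∃ k, N k = j
      · obtain ⟨k, rfl⟩ := hrange
        rw [hcN k]
        rcases Nat.eq_zero_or_pos k with rfl | hk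
        · have : ((0:ℕ):ℝ) ^ N 0 = 0 := by
            rw [Nat.cast_zero, zero_pow]; exact fun h => by have := hN1 0; omega
          rw [this, div_zero, zero_mul]
          linarith [hM1 0]
        · have hk1 : (1:ℝ) ≤ (k:ℝ) := by exact_mod_cast hk
          rcases lt_or_ge k k₀ with hlt | hge
          · have hpow : (1:ℝ) ≤ (k:ℝ) ^ N k := one_le_pow₀ hk1
            have h1 : M k / (k:ℝ) ^ N k * (r:ℝ) ^ N k ≤ M k * (r:ℝ) ^ N k := by
              have : M k / (k:ℝ) ^ N k ≤ M k := div_le_self (by linarith [hM1 k]) hpow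
              exact mul_le_mul_of_nonneg_right this (by positivity)
            have h2 : M k * (r:ℝ) ^ N k ≤ ∑ i ∈ Finset.range k₀, M i * (r:ℝ) ^ N i :=
              Finset.single_le_sum (f := fun i => M i * (r:ℝ) ^ N i)
                (fun i _ => mul_nonneg (le_trans zero_le_one (hM1 i)) (by positivity))
                (Finset.mem_range.mpr hlt)
            linarith [hM1 0]
          · have hk2r : 2 * (r:ℝ) ≤ (k:ℝ) := by
              calc 2 * (r:ℝ) ≤ (⌈2 * (r:ℝ)⌉₊ : ℝ) := Nat.le_ceil _
                _ ≤ (k:ℝ) := by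
                  have : ⌈2 * (r:ℝ)⌉₊ ≤ k := by omega
                  exact_mod_cast this
            have hrk : (r:ℝ) / (k:ℝ) ≤ 1 / 2 := by
              rw [div_le_div_iff₀ (by linarith) (by norm_num)]
              linarith
            have hrknn : (0:ℝ) ≤ (r:ℝ) / (k:ℝ) := by positivity
            have key : M k / (k:ℝ) ^ N k * (r:ℝ) ^ N k = M k * ((r:ℝ) / (k:ℝ)) ^ N k := by
              rw [div_pow]; ring
            rw [key]
            have h1 : ((r:ℝ) / (k:ℝ)) ^ N k ≤ (1/2) ^ N k := pow_le_pow_left₀ hrknn hrk _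
            have h2 : M k * ((r:ℝ) / (k:ℝ)) ^ N k ≤ M k * (1/2) ^ N k :=
              mul_le_mul_of_nonneg_left h1 (by linarith [hM1 k])
            have h3 : M k * (1/2) ^ N k ≤ 1 := by
              rw [one_div, inv_pow, mul_inv_le_iff₀ (by positivity), one_mul]
              exact hMP k
            linarith [hM1 0]
      · have hcj : c j = 0 := by
          simp only [hc, if_neg hj, Function.extend_def, dif_neg hrange, Pi.zero_apply]
        rw [hcj, zero_mul]
        linarith [hM1 0]
  have hball : HasFPowerSeriesOnBall p.sum p 0 ⊤ := by
    have := p.hasFPowerSeriesOnBall (by rw [hradius]; exact ENNReal.zero_lt_top)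
    rwa [hradius] at this
  have hanal : AnalyticOnNhd ℝ p.sum univ := fun x _ =>
    hball.analyticAt_of_mem (by simp only [EMetric.mem_ball]; exact edist_lt_top x 0)
  refine ⟨p.sum, hanal.contDiff, ?_⟩
  intro t ht
  have hsum : Summable fun j => c j * t ^ j := by
    have h1 : Summable fun j => ‖p j‖ * ((t.toNNReal : ℝ≥0) : ℝ) ^ j :=
      p.summable_norm_mul_pow (by rw [hradius]; exact ENNReal.coe_lt_top)
    simpa [hpnorm, Real.coe_toNNReal t ht] using h1
  have hval : p.sum t = ∑' j, c j * t ^ j := by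
    have := ofScalars_sum_eq c t
    simp only [smul_eq_mul] at this
    exact this
  have hterm : ∀ j, 0 ≤ c j * t ^ j := fun j =>
    mul_nonneg (hcnonneg j) (by positivity)
  rw [hval]
  rcases Nat.eq_zero_or_pos ⌊t⌋₊ with h0 | hposk
  · rw [h0]
    calc M 0 = c 0 * t ^ 0 := by rw [hc0]; ring
      _ ≤ ∑' j, c j * t ^ j := Summable.le_tsum hsum 0 fun j _ => hterm j
  · set k := ⌊t⌋₊ with hk
    have hkt : (k:ℝ) ≤ t := Nat.floor_le ht
    have hk1 : (1:ℝ) ≤ (k:ℝ) := by exact_mod_cast hposk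
    have hmain : M k ≤ c (N k) * t ^ N k := by
      rw [hcN, div_mul_eq_mul_div, le_div_iff₀ (by positivity)]
      exact mul_le_mul_of_nonneg_left (pow_le_pow_left₀ (by linarith) hkt _)
        (by linarith [hM1 k])
    calc M k ≤ c (N k) * t ^ N k := hmain
      _ ≤ ∑' j, c j * t ^ j := Summable.le_tsum hsum (N k) fun j _ => hterm j

/-- For every continuous function `f : ℝ^n × ℝ^l → ℝ` there exist smooth
(`C^∞`) functions `a : ℝ^n → ℝ` and `b : ℝ^l → ℝ`, nonnegative everywhere, such that
`|f(x,d)| ≤ a(x) * b(d)` for all `x`, `d`. -/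
theorem stmt_0 (n l : ℕ)
    (f : EuclideanSpace ℝ (Fin n) × EuclideanSpace ℝ (Fin l) → ℝ)
    (hf : Continuous f) :
    ∃ (a : EuclideanSpace ℝ (Fin n) → ℝ) (b : EuclideanSpace ℝ (Fin l) → ℝ),
      ContDiff ℝ (⊤ : ℕ∞) a ∧ ContDiff ℝ (⊤ : ℕ∞) b ∧
      (∀ x, 0 ≤ a x) ∧ (∀ d, 0 ≤ b d) ∧
      (∀ x d, |f (x, d)| ≤ a x * b d) := by
  set F : ℝ → ℝ := fun r => sSup ((fun p => |f p|) '' closedBall 0 r) with hF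
  have hbdd : ∀ r : ℝ, BddAbove ((fun p => |f p|) '' closedBall 0 r) := fun r =>
    ((isCompact_closedBall 0 r).image (hf.abs)).bddAbove
  have hFnonneg : ∀ r : ℝ, 0 ≤ F r := fun r =>
    Real.sSup_nonneg (fun y ⟨p, _, hp⟩ => hp ▸ abs_nonneg _)
  have hFmono : Monotone F := by
    intro r s hrs
    refine Real.sSup_le (fun y ⟨p, hp, hpy⟩ => ?_) (hFnonneg s)
    exact hpy ▸ le_csSup (hbdd s) ⟨p, closedBall_subset_closedBall hrs hp, rfl⟩
  have hFle : ∀ p : EuclideanSpace ℝ (Fin n) × EuclideanSpace ℝ (Fin l),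
      ∀ r : ℝ, ‖p‖ ≤ r → |f p| ≤ F r := by
    intro p r hp
    exact le_csSup (hbdd r) ⟨p, by simpa [mem_closedBall, dist_zero_right] using hp, rfl⟩
  set M : ℕ → ℝ := fun k => F (2 * (k:ℝ) + 4) + 2 with hM
  have hMmono : Monotone M := fun i j hij => by
    have : (i:ℝ) ≤ (j:ℝ) := by exact_mod_cast hij
    simp only [hM]
    have := hFmono (by linarith : 2 * (i:ℝ) + 4 ≤ 2 * (j:ℝ) + 4)
    linarith
  have hM1 : ∀ k, 1 ≤ M k := fun k => by
    simp only [hM]; linarith [hFnonneg (2 * (k:ℝ) + 4)]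
  obtain ⟨g, hg, hglb⟩ := exists_entire_majorant M hMmono hM1
  have hgs : ∀ t : ℝ, 0 ≤ t → F (2 * t + 2) + 2 ≤ g t := by
    intro t ht
    have h1 := hglb t ht
    have h2 : F (2 * t + 2) ≤ F (2 * (⌊t⌋₊ : ℝ) + 4) := by
      apply hFmono
      have := Nat.lt_floor_add_one t
      linarith
    simp only [hM] at h1
    linarith
  refine ⟨fun x => g (‖x‖ ^ 2), fun d => g (‖d‖ ^ 2),
    hg.comp (contDiff_norm_sq ℝ), hg.comp (contDiff_norm_sq ℝ), ?_, ?_, ?_⟩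
  · intro x
    have := hgs (‖x‖ ^ 2) (by positivity)
    linarith [hFnonneg (2 * ‖x‖ ^ 2 + 2)]
  · intro d
    have := hgs (‖d‖ ^ 2) (by positivity)
    linarith [hFnonneg (2 * ‖d‖ ^ 2 + 2)]
  · intro x d
    set s := ‖x‖ ^ 2 with hs
    set u := ‖d‖ ^ 2 with hu
    have hs0 : (0:ℝ) ≤ s := by positivity
    have hu0 : (0:ℝ) ≤ u := by positivity
    have hx : ‖x‖ ≤ s + 1 := by nlinarith [norm_nonneg x, sq_nonneg (‖x‖ - 1)]
    have hd : ‖d‖ ≤ u + 1 := by nlinarith [norm_nonneg d, sq_nonneg (‖d‖ - 1)]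
    have hnorm : ‖(x, d)‖ ≤ max (2 * s + 2) (2 * u + 2) := by
      rw [Prod.norm_def]
      exact max_le (le_trans hx (le_max_of_le_left (by linarith)))
        (le_trans hd (le_max_of_le_right (by linarith)))
    have h1 : |f (x, d)| ≤ F (max (2 * s + 2) (2 * u + 2)) := hFle _ _ hnorm
    have h2 : F (max (2 * s + 2) (2 * u + 2)) ≤ F (2 * s + 2) + F (2 * u + 2) := by
      rcases max_cases (2 * s + 2) (2 * u + 2) with ⟨h, _⟩ | ⟨h, _⟩ <;> rw [h]
      · linarith [hFnonneg (2 * u + 2)]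
      · linarith [hFnonneg (2 * s + 2)]
    have ha := hgs s hs0
    have hb := hgs u hu0
    have hA := hFnonneg (2 * s + 2)
    have hB := hFnonneg (2 * u + 2)
    have hprod : (F (2 * s + 2) + 2) * (F (2 * u + 2) + 2) ≤ g s * g u :=
      mul_le_mul ha hb (by linarith) (by linarith)
    nlinarith
end

section
/- For every continuously differentiable function f : ℝ^n × ℝ^l → ℝ satisfying f(0,d) = 0 for all d ∈ ℝ^l, there exists a smooth (C^∞) function m : ℝ^n × ℝ^l → ℝ with m(x,d) ≥ 0 for all x, d, such that |f(x,d)| ≤ m(x,d)·‖x‖ for all x ∈ ℝ^n and d ∈ ℝ^l. -/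
open Set
open scoped RealInnerProductSpace

lemma contDiff_tsum_pow {a : ℕ → ℝ}
    (hsum : ∀ r : ℝ, 0 ≤ r → Summable fun n => |a n| * r ^ n) :
    ContDiff ℝ (⊤ : WithTop ℕ∞) fun t : ℝ => ∑' n, a n * t ^ n := by
  set p := FormalMultilinearSeries.ofScalars ℝ a with hp
  have hrad : p.radius = ⊤ := by
    apply p.radius_eq_top_of_summable_norm
    intro r
    have := hsum r r.coe_nonneg
    refine this.congr fun n => ?_
    rw [FormalMultilinearSeries.ofScalars_norm]
    simp [abs_of_nonneg, NNReal.coe_pow]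
  have hball : HasFPowerSeriesOnBall p.sum p 0 ⊤ := by
    have := p.hasFPowerSeriesOnBall (by rw [hrad]; exact ENNReal.zero_lt_top)
    rwa [hrad] at this
  have han : AnalyticOnNhd ℝ p.sum univ := by
    have := hball.analyticOnNhd
    rwa [Metric.emetric_ball_top] at this
  have hC : ContDiff ℝ (⊤ : WithTop ℕ∞) p.sum := han.contDiff
  have heq : (fun t : ℝ => ∑' n, a n * t ^ n) = p.sum := by
    have h2 : p.sum = FormalMultilinearSeries.ofScalarsSum a := rfl
    rw [h2, FormalMultilinearSeries.ofScalarsSum_eq_tsum]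
    funext t
    exact tsum_congr fun n => by rw [smul_eq_mul]
  rw [heq]
  exact hC

/-- Entire majorant: any continuous function on a proper space is dominated through `‖p‖²` by
an entire (analytic) function of one variable. -/
lemma exists_entire_majorant_s1 {P : Type*} [NormedAddCommGroup P] [ProperSpace P]
    {M : P → ℝ} (hM : Continuous M) :
    ∃ g : ℝ → ℝ, ContDiff ℝ (⊤ : WithTop ℕ∞) g ∧ (∀ t, 0 ≤ t → 1 ≤ g t) ∧
      (∀ p t, ‖p‖ ^ 2 ≤ t → M p ≤ g t) := by
  classical
  set S : ℕ → ℝ := fun k => sSup (M '' Metric.closedBall (0 : P) (k + 1)) with hSdef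
  have hS : ∀ (k : ℕ) (p : P), ‖p‖ ≤ k + 1 → M p ≤ S k := by
    intro k p hp
    exact le_csSup ((isCompact_closedBall _ _).image hM).bddAbove
      ⟨p, by simpa [Metric.mem_closedBall, dist_zero_right] using hp, rfl⟩
  set T : ℕ → ℝ := fun k => max (S k) 0 + 1 with hTdef
  have hT1 : ∀ k, 1 ≤ T k := fun k => by
    have := le_max_right (S k) 0; simp only [hTdef]; linarith
  have hT0 : ∀ k, (0:ℝ) ≤ T k := fun k => zero_le_one.trans (hT1 k)
  have hMT : ∀ (k : ℕ) (p : P), ‖p‖ ≤ k + 1 → M p ≤ T k := by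
    intro k p hp
    have := le_max_left (S k) 0
    have := hS k p hp
    simp only [hTdef]; linarith
  set C : ℕ → ℕ := fun k => ⌈Real.logb 2 (T (k + 1))⌉₊ with hCdef
  have hC : ∀ k, T (k + 1) ≤ 2 ^ C k := by
    intro k
    have h1 : (0:ℝ) < T (k + 1) := one_pos.trans_le (hT1 _)
    calc T (k + 1) = (2:ℝ) ^ Real.logb 2 (T (k + 1)) :=
          (Real.rpow_logb (by norm_num) (by norm_num) h1).symm
      _ ≤ (2:ℝ) ^ ((C k : ℝ)) :=
          Real.rpow_le_rpow_of_exponent_le (by norm_num) (Nat.le_ceil _)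
      _ = 2 ^ C k := by rw [Real.rpow_natCast]
  set N : ℕ → ℕ := fun k => (k + 1) + ∑ j ∈ Finset.range (k + 1), C j with hNdef
  have hNmono : StrictMono N := by
    apply strictMono_nat_of_lt_succ
    intro k
    simp only [hNdef, Finset.sum_range_succ]
    omega
  have hNge : ∀ k, k + 1 ≤ N k := fun k => Nat.le_add_right _ _
  have hNC : ∀ k, C k + (k + 1) ≤ N k := by
    intro k
    have : C k ≤ ∑ j ∈ Finset.range (k + 1), C j :=
      Finset.single_le_sum (f := C) (fun _ _ => Nat.zero_le _) (Finset.self_mem_range_succ k)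
    simp only [hNdef]; omega
  set a : ℕ → ℝ := fun n => (if n = 0 then T 0 else 0) +
      ∑ k ∈ Finset.range n, (if N k = n then T (k + 1) / ((k : ℝ) + 1) ^ n else 0) with hadef
  have ha0 : a 0 = T 0 := by simp [hadef]
  have haN : ∀ k, a (N k) = T (k + 1) / ((k : ℝ) + 1) ^ (N k) := by
    intro k
    have hk0 : N k ≠ 0 := by have := hNge k; omega
    have hkmem : k ∈ Finset.range (N k) := Finset.mem_range.2 ((Nat.lt_succ_self k).trans_le (hNge k))
    simp only [hadef, if_neg hk0, zero_add]
    rw [Finset.sum_eq_single_of_mem k hkmem]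
    · rw [if_pos rfl]
    · intro j _ hj; exact if_neg fun h => hj (hNmono.injective h)
  have hapos : ∀ n, 0 ≤ a n := by
    intro n
    refine add_nonneg ?_ (Finset.sum_nonneg fun k _ => ?_)
    · split
      · exact hT0 0
      · exact le_rfl
    · split
      · exact div_nonneg (hT0 _) (by positivity)
      · exact le_rfl
  -- summability of the power series at every nonnegative radius
  have hsum : ∀ r : ℝ, 0 ≤ r → Summable fun n => a n * r ^ n := by
    intro r hr
    have h1 : Summable fun n => (if n = 0 then T 0 else 0) * r ^ n := by
      apply summable_of_ne_finset_zero (s := {0})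
      intro n hn
      rw [if_neg (by simpa using hn), zero_mul]
    have h2 : Summable fun n =>
        (∑ k ∈ Finset.range n, (if N k = n then T (k + 1) / ((k : ℝ) + 1) ^ n else 0)) * r ^ n := by
      set F : ℕ → ℝ := fun n =>
        (∑ k ∈ Finset.range n, (if N k = n then T (k + 1) / ((k : ℝ) + 1) ^ n else 0)) * r ^ n
        with hFdef
      have hFoff : ∀ n ∉ Set.range N, F n = 0 := by
        intro n hn
        simp only [hFdef]
        rw [Finset.sum_eq_zero, zero_mul]
        intro k _
        exact if_neg fun h => hn ⟨k, h⟩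
      have hFN : ∀ k, F (N k) = T (k + 1) * (r / ((k : ℝ) + 1)) ^ (N k) := by
        intro k
        have h3 : (∑ j ∈ Finset.range (N k),
            (if N j = N k then T (j + 1) / ((j : ℝ) + 1) ^ (N k) else 0))
            = T (k + 1) / ((k : ℝ) + 1) ^ (N k) := by
          rw [Finset.sum_eq_single_of_mem k
            (Finset.mem_range.2 ((Nat.lt_succ_self k).trans_le (hNge k)))]
          · rw [if_pos rfl]
          · intro j _ hj; exact if_neg fun h => hj (hNmono.injective h)
        simp only [hFdef, h3, div_pow]
        ring
      have hFcomp : Summable (F ∘ N) := by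
        apply Summable.of_norm_bounded_eventually_nat (g := fun k => ((1:ℝ)/2) ^ k)
        · exact summable_geometric_of_lt_one (by norm_num) (by norm_num)
        · rw [Filter.eventually_atTop]
          refine ⟨⌈2 * r⌉₊, fun k hk => ?_⟩
          have hk2 : 2 * r ≤ (k : ℝ) + 1 := by
            have := Nat.ceil_le.1 (le_refl ⌈2 * r⌉₊)
            have hkk : (⌈2 * r⌉₊ : ℝ) ≤ (k : ℝ) := by exact_mod_cast hk
            have := (Nat.le_ceil (2 * r)).trans hkk
            linarith
          have hdiv : r / ((k : ℝ) + 1) ≤ 1 / 2 := by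
            rw [div_le_div_iff₀ (by positivity) (by norm_num)]
            linarith
          have hdiv0 : 0 ≤ r / ((k : ℝ) + 1) := by positivity
          have hterm : F (N k) ≤ ((1:ℝ)/2) ^ k := by
            rw [hFN k]
            calc T (k + 1) * (r / ((k : ℝ) + 1)) ^ (N k)
                ≤ (2 ^ C k) * ((1/2) ^ (N k)) := by
                  apply mul_le_mul (hC k) (pow_le_pow_left₀ hdiv0 hdiv _)
                    (pow_nonneg hdiv0 _) (by positivity)
              _ = (1/2 : ℝ) ^ (N k - C k) := by
                  have hsplit : N k = C k + (N k - C k) := by have := hNC k; omega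
                  calc (2:ℝ) ^ C k * ((1/2) ^ (N k))
                      = 2 ^ C k * ((1/2) ^ (C k) * (1/2) ^ (N k - C k)) := by
                        rw [← pow_add, ← hsplit]
                    _ = (2 * (1/2) : ℝ) ^ (C k) * (1/2) ^ (N k - C k) := by
                        rw [mul_pow]; ring
                    _ = (1/2 : ℝ) ^ (N k - C k) := by norm_num
              _ ≤ (1/2 : ℝ) ^ k := by
                  apply pow_le_pow_of_le_one (by norm_num) (by norm_num)
                  have := hNC k; omega
          have hterm0 : 0 ≤ F (N k) := by
            rw [hFN k]
            exact mul_nonneg (hT0 _) (pow_nonneg hdiv0 _)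
          simpa [Function.comp, abs_of_nonneg hterm0] using hterm
      exact (Function.Injective.summable_iff hNmono.injective hFoff).1 hFcomp
    exact (h1.add h2).congr fun n => by simp only [hadef]; ring
  have hsum' : ∀ r : ℝ, 0 ≤ r → Summable fun n => |a n| * r ^ n := by
    intro r hr
    exact (hsum r hr).congr fun n => by rw [abs_of_nonneg (hapos n)]
  set g : ℝ → ℝ := fun t => ∑' n, a n * t ^ n with hgdef
  have hgsmooth : ContDiff ℝ (⊤ : WithTop ℕ∞) g := contDiff_tsum_pow hsum'
  have hterm_le : ∀ t : ℝ, 0 ≤ t → ∀ m : ℕ, a m * t ^ m ≤ g t := by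
    intro t ht m
    exact Summable.le_tsum (hsum t ht) m fun j _ => mul_nonneg (hapos j) (pow_nonneg ht j)
  have hgT : ∀ (k : ℕ) (t : ℝ), 0 ≤ t → (k : ℝ) ≤ t → T k ≤ g t := by
    intro k t ht hkt
    match k with
    | 0 =>
      have := hterm_le t ht 0
      rw [ha0] at this  -- a 0 * t^0 = T 0
      simpa using this
    | Nat.succ j =>
      have h1 := hterm_le t ht (N j)
      have h2 : a (N j) * t ^ (N j) = T (j + 1) * (t / ((j : ℝ) + 1)) ^ (N j) := by
        rw [haN j, div_pow]; ring
      have h3 : (1 : ℝ) ≤ t / ((j : ℝ) + 1) := by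
        rw [le_div_iff₀ (by positivity)]
        push_cast at hkt ⊢
        linarith
      have h4 : T (j + 1) ≤ T (j + 1) * (t / ((j : ℝ) + 1)) ^ (N j) :=
        le_mul_of_one_le_right (hT0 _) (one_le_pow₀ h3)
      exact h4.trans (h2 ▸ h1)
  refine ⟨g, hgsmooth, fun t ht => ?_, fun p t hpt => ?_⟩
  · exact (hT1 0).trans (hgT 0 t ht (by exact_mod_cast ht))
  · have ht0 : 0 ≤ t := (sq_nonneg _).trans hpt
    set k := ⌊t⌋₊ with hkdef
    have hp1 : ‖p‖ ≤ (k : ℝ) + 1 := by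
      have hlt : t < (k : ℝ) + 1 := Nat.lt_floor_add_one t
      have h2 : ‖p‖ ^ 2 ≤ ((k : ℝ) + 1) ^ 2 := by
        have : ((k : ℝ) + 1) ≤ ((k : ℝ) + 1) ^ 2 := by nlinarith [Nat.cast_nonneg (α := ℝ) k]
        nlinarith
      nlinarith [norm_nonneg p, Nat.cast_nonneg (α := ℝ) k]
    have hMp : M p ≤ T k := hMT k p hp1
    exact hMp.trans (hgT k t ht0 (Nat.floor_le ht0))

/-- For every continuously differentiable `f : ℝ^n × ℝ^l → ℝ` with
`f(0,d) = 0` for all `d`, there is a smooth nonnegative `m` with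
`|f(x,d)| ≤ m(x,d) * ‖x‖` for all `x`, `d`. -/
theorem stmt_1 (n l : ℕ)
    (f : EuclideanSpace ℝ (Fin n) × EuclideanSpace ℝ (Fin l) → ℝ)
    (hf : ContDiff ℝ 1 f) (hf0 : ∀ d, f (0, d) = 0) :
    ∃ m : EuclideanSpace ℝ (Fin n) × EuclideanSpace ℝ (Fin l) → ℝ,
      ContDiff ℝ (⊤ : ℕ∞) m ∧ (∀ x d, 0 ≤ m (x, d)) ∧
      (∀ x d, |f (x, d)| ≤ m (x, d) * ‖x‖) := by
  classical
  set M : EuclideanSpace ℝ (Fin n) × EuclideanSpace ℝ (Fin l) → ℝ := fun p =>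
    sSup ((fun t : ℝ => ‖fderiv ℝ f (t • p.1, p.2)‖) '' Set.Icc (0:ℝ) 1) with hMdef
  have hfd : Continuous (fderiv ℝ f) := hf.continuous_fderiv one_ne_zero
  have hcont2 : Continuous fun q :
      (EuclideanSpace ℝ (Fin n) × EuclideanSpace ℝ (Fin l)) × ℝ =>
      ‖fderiv ℝ f (q.2 • q.1.1, q.1.2)‖ := by
    apply (hfd.comp ?_).norm
    exact (continuous_snd.smul (continuous_fst.fst)).prodMk continuous_fst.snd
  have hMcont : Continuous M :=
    (isCompact_Icc (a := (0:ℝ)) (b := 1)).continuous_sSup hcont2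
  have hbdd : ∀ p : EuclideanSpace ℝ (Fin n) × EuclideanSpace ℝ (Fin l),
      BddAbove ((fun t : ℝ => ‖fderiv ℝ f (t • p.1, p.2)‖) '' Set.Icc (0:ℝ) 1) := by
    intro p
    exact ((isCompact_Icc).image (hcont2.comp (Continuous.prodMk_right p))).bddAbove
  have hMnonneg : ∀ p, 0 ≤ M p := by
    intro p
    have h0 : ‖fderiv ℝ f ((0:ℝ) • p.1, p.2)‖ ∈
        ((fun t : ℝ => ‖fderiv ℝ f (t • p.1, p.2)‖) '' Set.Icc (0:ℝ) 1) :=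
      Set.mem_image_of_mem _ (by norm_num)
    exact le_trans (norm_nonneg _) (le_csSup (hbdd p) h0)
  have hbound : ∀ x d, |f (x, d)| ≤ M (x, d) * ‖x‖ := by
    intro x d
    have hdiff : Differentiable ℝ f := hf.differentiable one_ne_zero
    have hgdiff : ∀ y, DifferentiableAt ℝ (fun y => f (y, d)) y := fun y =>
      (hdiff (y, d)).comp y ((differentiable_id.prodMk (differentiable_const d)) y)
    have hgderiv : ∀ y, fderiv ℝ (fun y => f (y, d)) y =
        (fderiv ℝ f (y, d)).comp
          (ContinuousLinearMap.inl ℝ (EuclideanSpace ℝ (Fin n)) (EuclideanSpace ℝ (Fin l))) := by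
      intro y
      have h1 : HasFDerivAt (fun y : EuclideanSpace ℝ (Fin n) => (y, d))
          (ContinuousLinearMap.inl ℝ (EuclideanSpace ℝ (Fin n)) (EuclideanSpace ℝ (Fin l))) y :=
        HasFDerivAt.prodMk (hasFDerivAt_id y) (hasFDerivAt_const d y)
      exact ((hdiff (y, d)).hasFDerivAt.comp y h1).fderiv
    have hseg : ∀ y ∈ segment ℝ (0 : EuclideanSpace ℝ (Fin n)) x,
        ‖fderiv ℝ (fun y => f (y, d)) y‖ ≤ M (x, d) := by
      intro y hy
      rw [segment_eq_image ℝ (0 : EuclideanSpace ℝ (Fin n)) x] at hy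
      obtain ⟨t, ht, rfl⟩ := hy
      simp only [smul_sub, smul_zero, zero_add, sub_zero]
      rw [hgderiv]
      have hcomp : ‖(fderiv ℝ f (t • x, d)).comp (ContinuousLinearMap.inl ℝ
          (EuclideanSpace ℝ (Fin n)) (EuclideanSpace ℝ (Fin l)))‖
          ≤ ‖fderiv ℝ f (t • x, d)‖ := by
        apply ContinuousLinearMap.opNorm_le_bound _ (norm_nonneg _)
        intro y
        calc ‖(fderiv ℝ f (t • x, d)) (y, 0)‖
            ≤ ‖fderiv ℝ f (t • x, d)‖ * ‖((y, 0) :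
                EuclideanSpace ℝ (Fin n) × EuclideanSpace ℝ (Fin l))‖ :=
              ContinuousLinearMap.le_opNorm _ _
          _ = ‖fderiv ℝ f (t • x, d)‖ * ‖y‖ := by
              congr 1
              simp [Prod.norm_def]
      exact hcomp.trans (le_csSup (hbdd (x, d)) (Set.mem_image_of_mem _ ht))
    have := (convex_segment (0 : EuclideanSpace ℝ (Fin n)) x).norm_image_sub_le_of_norm_fderiv_le
      (fun y _ => hgdiff y) hseg (left_mem_segment ℝ _ x) (right_mem_segment ℝ _ x)
    simpa [hf0 d, Real.norm_eq_abs] using this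
  -- now get the entire majorant
  obtain ⟨g, hgsmooth, hg1, hgM⟩ := exists_entire_majorant_s1 hMcont
  refine ⟨fun q => g (⟪q.1, q.1⟫ + ⟪q.2, q.2⟫), ?_, ?_, ?_⟩
  · apply (hgsmooth.of_le le_top).comp
    exact (contDiff_inner.comp (contDiff_fst.prodMk contDiff_fst)).add
      (contDiff_inner.comp (contDiff_snd.prodMk contDiff_snd))
  · intro x d
    have h1 : (0:ℝ) ≤ ⟪x, x⟫ + ⟪d, d⟫ :=
      add_nonneg real_inner_self_nonneg real_inner_self_nonneg
    linarith [hg1 _ h1]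
  · intro x d
    have hle : ‖(x, d)‖ ^ 2 ≤ ⟪x, x⟫ + ⟪d, d⟫ := by
      rw [real_inner_self_eq_norm_sq, real_inner_self_eq_norm_sq]
      have : ‖(x, d)‖ = max ‖x‖ ‖d‖ := rfl
      rw [this]
      rcases max_cases ‖x‖ ‖d‖ with ⟨h, _⟩ | ⟨h, _⟩ <;> rw [h] <;>
        nlinarith [norm_nonneg x, norm_nonneg d]
    have h2 : M (x, d) ≤ g (⟪x, x⟫ + ⟪d, d⟫) := hgM (x, d) _ hle
    calc |f (x, d)| ≤ M (x, d) * ‖x‖ := hbound x d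
      _ ≤ g (⟪x, x⟫ + ⟪d, d⟫) * ‖x‖ := by gcongr
end

section
/- Let 𝕍 ⊂ ℝ^m be a compact set and fix ω ∈ ℝ^l. Then there exist smooth (C^∞) functions γ₁,…,γ_N : ℝ^m → ℝ with γ_i(z) > 0 for all z, and positive constants β_M and λ_M, such that for every v ∈ 𝕍 and all v̂₁,…,v̂_N ∈ ℝ^m, setting ṽ_i = v̂_i − v and z_i = −Σ_{j=1}^N H_{ij} ṽ_j, one has Σ_{i=1}^N ‖φ(v̂_i)ω − φ(v)ω‖² ≤ β_M² λ_M Σ_{i=1}^N γ_i(z_i) ‖z_i‖². -/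
open Matrix

section Carleman

open FormalMultilinearSeries

/-- Carleman-type lemma: every continuous function on a proper normed space is dominated by
`h ∘ (‖·‖^2)` for some entire real-analytic `h` which is monotone and `≥ 1` on `[0, ∞)`. -/
lemma exists_analytic_majorant {F : Type*} [NormedAddCommGroup F] [ProperSpace F]
    (Θ : F → ℝ) (hΘ : Continuous Θ) :
    ∃ h : ℝ → ℝ, ContDiff ℝ (⊤ : ℕ∞) h ∧ (∀ s t : ℝ, 0 ≤ s → s ≤ t → h s ≤ h t) ∧
      (∀ s : ℝ, 0 ≤ s → 1 ≤ h s) ∧ (∀ x : F, Θ x ≤ h (‖x‖ ^ 2)) := by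
  classical
  -- the sup of Θ on balls
  set M : ℕ → ℝ := fun n => (sSup (Θ '' Metric.closedBall 0 ((n : ℝ) + 2)) ⊔ 0) + 1 with hMdef
  have hM1 : ∀ n, 1 ≤ M n := fun n => by
    simp only [hMdef]
    have : (0:ℝ) ≤ sSup (Θ '' Metric.closedBall 0 ((n : ℝ) + 2)) ⊔ 0 := le_sup_right
    linarith
  have hM0 : ∀ n, 0 < M n := fun n => lt_of_lt_of_le one_pos (hM1 n)
  have hMub : ∀ (n : ℕ) (x : F), ‖x‖ ≤ (n : ℝ) + 2 → Θ x ≤ M n := by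
    intro n x hx
    have hb : BddAbove (Θ '' Metric.closedBall 0 ((n : ℝ) + 2)) :=
      ((isCompact_closedBall (0 : F) _).image hΘ).bddAbove
    have hmem : Θ x ∈ Θ '' Metric.closedBall 0 ((n : ℝ) + 2) :=
      Set.mem_image_of_mem Θ (by simpa [Metric.mem_closedBall] using hx)
    have := le_csSup hb hmem
    have h2 : Θ x ≤ sSup (Θ '' Metric.closedBall 0 ((n : ℝ) + 2)) ⊔ 0 := le_sup_of_le_left this
    simp only [hMdef]; linarith
  -- choose exponents making tails small
  have hex : ∀ m : ℕ, ∃ K : ℕ, M (m + 1) * ((m : ℝ) / (m + 1)) ^ K ≤ (2⁻¹ : ℝ) ^ (m + 1) := by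
    intro m
    have hpos : (0:ℝ) < (m : ℝ) + 1 := by positivity
    have h0 : (0:ℝ) ≤ (m : ℝ) / (m + 1) := by positivity
    have hlt : ((m : ℝ) / (m + 1)) < 1 := by
      rw [div_lt_one hpos]; linarith
    have htend := tendsto_pow_atTop_nhds_zero_of_lt_one h0 hlt
    have hεpos : 0 < (2⁻¹ : ℝ) ^ (m + 1) / M (m + 1) := by positivity
    obtain ⟨K, hK⟩ := (htend.eventually (gt_mem_nhds hεpos)).exists
    refine ⟨K, ?_⟩
    rw [lt_div_iff₀ (hM0 (m + 1))] at hK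
    nlinarith [hK]
  choose k' hk' using hex
  set k : ℕ → ℕ := fun n => n + ∑ i ∈ Finset.range n, k' i with hkdef
  have hkmono : StrictMono k := by
    apply strictMono_nat_of_lt_succ
    intro n
    simp only [hkdef, Finset.sum_range_succ]
    omega
  have hk0 : k 0 = 0 := by simp [hkdef]
  have hkk' : ∀ m, k' m ≤ k (m + 1) := by
    intro m
    simp only [hkdef, Finset.sum_range_succ]
    omega
  have hkn : ∀ n, n ≤ k n := fun n => by simp [hkdef]
  -- smallness of chosen coefficients
  have hsmall : ∀ m : ℕ, M (m + 1) * ((m : ℝ) / (m + 1)) ^ (k (m + 1)) ≤ (2⁻¹ : ℝ) ^ (m + 1) := by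
    intro m
    have h0 : (0:ℝ) ≤ (m : ℝ) / (m + 1) := by positivity
    have hle1 : ((m : ℝ) / (m + 1)) ≤ 1 := by
      rw [div_le_one (by positivity)]; linarith
    have := pow_le_pow_of_le_one h0 hle1 (hkk' m)
    calc M (m + 1) * ((m : ℝ) / (m + 1)) ^ (k (m + 1))
        ≤ M (m + 1) * ((m : ℝ) / (m + 1)) ^ (k' m) :=
          mul_le_mul_of_nonneg_left this (hM0 (m + 1)).le
      _ ≤ (2⁻¹ : ℝ) ^ (m + 1) := hk' m
  -- coefficients
  set c : ℕ → ℝ := fun n => if n = 0 then M 0 else M n / (n : ℝ) ^ (k n) with hcdef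
  have hc0 : ∀ n, 0 ≤ c n := by
    intro n
    simp only [hcdef]
    split
    · exact (hM0 0).le
    · next h => positivity
  set a : ℕ → ℝ := Function.extend k c 0 with hadef
  have hka : ∀ n, a (k n) = c n := fun n => hkmono.injective.extend_apply c 0 n
  have ha0 : ∀ j, 0 ≤ a j := by
    intro j
    by_cases hj : ∃ n, k n = j
    · obtain ⟨n, rfl⟩ := hj; rw [hka]; exact hc0 n
    · rw [hadef, Function.extend_apply' _ _ _ hj]; simp
  -- master summability
  have hsumm : ∀ r : ℝ, 0 ≤ r → Summable (fun n : ℕ => c n * r ^ (k n)) := by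
    intro r hr
    set N : ℕ := ⌈r⌉₊ + 1 with hNdef
    rw [← summable_nat_add_iff N]
    have hb : ∀ j : ℕ, c (j + N) * r ^ (k (j + N)) ≤ (2⁻¹ : ℝ) ^ (j + N) := by
      intro j
      obtain ⟨m, hm⟩ : ∃ m, j + N = m + 1 := ⟨j + N - 1, by omega⟩
      rw [hm]
      have hrm : r ≤ (m : ℝ) := by
        have h1 : r ≤ (⌈r⌉₊ : ℝ) := Nat.le_ceil r
        have hmge : (⌈r⌉₊ : ℕ) ≤ m := by omega
        exact h1.trans (by exact_mod_cast hmge)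
      have hpos : (0:ℝ) < ((m : ℝ) + 1) := by positivity
      have hcn : c (m + 1) = M (m + 1) / ((m : ℝ) + 1) ^ (k (m + 1)) := by
        simp only [hcdef]
        norm_num
      have hratio : (r / ((m : ℝ) + 1)) ^ (k (m + 1)) ≤ ((m : ℝ) / ((m : ℝ) + 1)) ^ (k (m + 1)) := by
        apply pow_le_pow_left₀ (by positivity)
        gcongr
      have heq : c (m + 1) * r ^ (k (m + 1)) = M (m + 1) * (r / ((m : ℝ) + 1)) ^ (k (m + 1)) := by
        rw [hcn, div_pow]
        field_simp
      rw [heq]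
      calc M (m + 1) * (r / ((m : ℝ) + 1)) ^ (k (m + 1))
          ≤ M (m + 1) * ((m : ℝ) / ((m : ℝ) + 1)) ^ (k (m + 1)) :=
            mul_le_mul_of_nonneg_left hratio (hM0 (m + 1)).le
        _ ≤ (2⁻¹ : ℝ) ^ (m + 1) := hsmall m
    apply Summable.of_nonneg_of_le (fun j => by positivity) hb
    exact ((summable_geometric_of_lt_one (by norm_num) (by norm_num)).comp_injective
      (add_left_injective N))
  -- summability of the full coefficient sequence against powers
  have hsumma : ∀ r : ℝ, 0 ≤ r → Summable (fun j : ℕ => a j * r ^ j) := by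
    intro r hr
    have hfun : (fun j : ℕ => a j * r ^ j) =
        Function.extend k (fun n => c n * r ^ (k n)) 0 := by
      funext j
      by_cases hj : ∃ n, k n = j
      · obtain ⟨n, rfl⟩ := hj
        rw [hka, hkmono.injective.extend_apply]
      · rw [hadef, Function.extend_apply' _ _ _ hj, Function.extend_apply' _ _ _ hj]
        simp
    rw [hfun]
    rw [← hkmono.injective.summable_iff (f := Function.extend k (fun n => c n * r ^ (k n)) 0)
      (fun j hj => Function.extend_apply' _ _ _ (by simpa [Set.range] using hj) ▸ rfl)]
    · have : (Function.extend k (fun n => c n * r ^ (k n)) 0) ∘ k =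
          fun n => c n * r ^ (k n) := by
        funext n; exact hkmono.injective.extend_apply _ _ n
      rw [this]
      exact hsumm r hr
  -- the analytic function
  set p : FormalMultilinearSeries ℝ ℝ ℝ := ofScalars ℝ a with hpdef
  have hrad : p.radius = ⊤ := by
    apply p.radius_eq_top_of_summable_norm
    intro r
    refine (hsumma r r.coe_nonneg).congr fun j => ?_
    rw [hpdef, ofScalars_norm, Real.norm_eq_abs, abs_of_nonneg (ha0 j)]
  have hval : ∀ s : ℝ, p.sum s = ∑' j : ℕ, a j * s ^ j := by
    intro s
    refine tsum_congr fun j => ?_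
    rw [hpdef, ofScalars_apply_eq, smul_eq_mul]
  have hball : HasFPowerSeriesOnBall p.sum p 0 p.radius :=
    p.hasFPowerSeriesOnBall (by rw [hrad]; exact ENNReal.zero_lt_top)
  have hanal : AnalyticOnNhd ℝ p.sum Set.univ := fun x _ =>
    hball.analyticAt_of_mem (by
      rw [EMetric.mem_ball, hrad]
      exact edist_lt_top x 0)
  refine ⟨p.sum, hanal.contDiff, ?_, ?_, ?_⟩
  · intro s t hs hst
    rw [hval s, hval t]
    refine Summable.tsum_le_tsum (fun j => ?_) (hsumma s hs) (hsumma t (hs.trans hst))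
    exact mul_le_mul_of_nonneg_left (pow_le_pow_left₀ hs hst j) (ha0 j)
  · intro s hs
    have ha0v : a 0 = M 0 := by
      have := hka 0
      rw [hk0] at this
      rw [this, hcdef]
      simp
    have h1 : (1:ℝ) ≤ a 0 * s ^ 0 := by
      rw [pow_zero, mul_one, ha0v]; exact hM1 0
    refine h1.trans ?_
    rw [hval s]
    exact Summable.le_tsum (hsumma s hs) 0 fun j _ => mul_nonneg (ha0 j) (pow_nonneg hs j)
  · intro x
    set s : ℝ := ‖x‖ ^ 2 with hsdef
    have hs0 : 0 ≤ s := by positivity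
    rcases Nat.eq_zero_or_pos ⌊s⌋₊ with hn | hn
    · have hs1 : s < 1 := by
        have := Nat.lt_floor_add_one s
        rw [hn] at this
        simpa using this
      have hx2 : ‖x‖ ≤ (0 : ℝ) + 2 := by nlinarith [norm_nonneg x]
      have hΘx : Θ x ≤ M 0 := hMub 0 x (by simpa using hx2)
      have ha0v : a 0 = M 0 := by
        have := hka 0
        rw [hk0] at this
        rw [this, hcdef]; simp
      have : M 0 = a 0 * s ^ 0 := by rw [pow_zero, mul_one, ha0v]
      rw [hval s]
      exact hΘx.trans (this.le.trans (Summable.le_tsum (hsumma s hs0) 0 fun j _ => mul_nonneg (ha0 j) (pow_nonneg hs0 j)))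
    · set n : ℕ := ⌊s⌋₊ with hndef
      have hns : (n : ℝ) ≤ s := Nat.floor_le hs0
      have hsn1 : s < (n : ℝ) + 1 := Nat.lt_floor_add_one s
      have hn0 : (0:ℝ) ≤ (n : ℝ) := by positivity
      have hxn : ‖x‖ ≤ (n : ℝ) + 2 := by nlinarith [norm_nonneg x]
      have hΘx : Θ x ≤ M n := hMub n x hxn
      have hne : n ≠ 0 := Nat.pos_iff_ne_zero.mp hn
      have hcn : c n = M n / (n : ℝ) ^ (k n) := by
        rw [hcdef]; simp [hne]
      have hnpow : (0:ℝ) < (n : ℝ) ^ (k n) := by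
        have : (0:ℝ) < (n : ℝ) := by exact_mod_cast Nat.pos_of_ne_zero hne
        positivity
      have hMn : M n ≤ a (k n) * s ^ (k n) := by
        rw [hka n, hcn]
        have hpow : (n : ℝ) ^ (k n) ≤ s ^ (k n) := pow_le_pow_left₀ hn0 hns (k n)
        calc M n = M n / (n : ℝ) ^ (k n) * (n : ℝ) ^ (k n) := by
              field_simp
          _ ≤ M n / (n : ℝ) ^ (k n) * s ^ (k n) := by
              apply mul_le_mul_of_nonneg_left hpow
              positivity
      rw [hval s]
      exact hΘx.trans (hMn.trans (Summable.le_tsum (hsumma s hs0) (k n) fun j _ => mul_nonneg (ha0 j) (pow_nonneg hs0 j)))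

end Carleman


/-- Action of a real `k × l` matrix on a Euclidean vector. -/
noncomputable def mApply {k l : ℕ} (A : Matrix (Fin k) (Fin l) ℝ)
    (x : EuclideanSpace ℝ (Fin l)) : EuclideanSpace ℝ (Fin k) :=
  (EuclideanSpace.equiv (Fin k) ℝ).symm (A.mulVec (EuclideanSpace.equiv (Fin l) ℝ x))

set_option maxHeartbeats 1000000 in
/-- Let `𝕍 ⊂ ℝ^m` be compact and fix `ω ∈ ℝ^l`.  There exist smooth positive
functions `γ₁,…,γ_N : ℝ^m → ℝ` and positive constants `β_M`, `λ_M` such that for every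
`v ∈ 𝕍` and all `v̂₁,…,v̂_N ∈ ℝ^m`, with `ṽ_i = v̂_i − v` and `z_i = −Σ_j H_{ij} ṽ_j`,
`Σ_i ‖φ(v̂_i)ω − φ(v)ω‖² ≤ β_M² λ_M Σ_i γ_i(z_i) ‖z_i‖²`. -/
theorem stmt_3 (m l N : ℕ)
    (φ : EuclideanSpace ℝ (Fin m) → Matrix (Fin m) (Fin l) ℝ)
    (hφ : ∀ a b, ContDiff ℝ (⊤ : ℕ∞) fun v => φ v a b)
    (ω : EuclideanSpace ℝ (Fin l))
    (H : Matrix (Fin N) (Fin N) ℝ) (hH : H.PosDef)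
    (𝕍 : Set (EuclideanSpace ℝ (Fin m))) (h𝕍 : IsCompact 𝕍) :
    ∃ (γ : Fin N → EuclideanSpace ℝ (Fin m) → ℝ) (βM lM : ℝ),
      (∀ i, ContDiff ℝ (⊤ : ℕ∞) (γ i)) ∧ (∀ i z, 0 < γ i z) ∧ 0 < βM ∧ 0 < lM ∧
      ∀ v ∈ 𝕍, ∀ vhat : Fin N → EuclideanSpace ℝ (Fin m),
        ∀ z : Fin N → EuclideanSpace ℝ (Fin m),
          (∀ i, z i = -(∑ j, H i j • (vhat j - v))) →
          (∑ i, ‖mApply (φ (vhat i)) ω - mApply (φ v) ω‖ ^ 2) ≤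
            βM ^ 2 * lM * ∑ i, γ i (z i) * ‖z i‖ ^ 2 := by
  classical
  set f : EuclideanSpace ℝ (Fin m) → EuclideanSpace ℝ (Fin m) :=
    fun v => mApply (φ v) ω with hfdef
  have hf : ContDiff ℝ (⊤ : ℕ∞) f := by
    rw [contDiff_euclidean]
    intro κ
    have h1 : (fun v => f v κ) = fun v => ∑ b, φ v κ b * ω b := rfl
    rw [h1]
    exact ContDiff.sum fun b _ => (hφ κ b).mul contDiff_const
  -- radius of a ball containing 𝕍
  obtain ⟨R0, hR0⟩ := h𝕍.isBounded.subset_closedBall 0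
  set R : ℝ := |R0| with hRdef
  have hR0' : 𝕍 ⊆ Metric.closedBall 0 R :=
    hR0.trans (Metric.closedBall_subset_closedBall (le_abs_self R0))
  have hRnn : 0 ≤ R := abs_nonneg R0
  -- Lipschitz constant near 𝕍
  obtain ⟨L, hL⟩ := (isCompact_closedBall (0 : EuclideanSpace ℝ (Fin m))
    (R + 1)).exists_bound_of_continuousOn (hf.continuous_fderiv (by simp)).continuousOn
  set L0 : ℝ := L ⊔ 0 with hL0def
  have hL0nn : 0 ≤ L0 := le_sup_right
  -- bound of f on 𝕍
  obtain ⟨B, hB⟩ := h𝕍.exists_bound_of_continuousOn hf.continuous.continuousOn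
  set B0 : ℝ := B ⊔ 0 with hB0def
  have hB0nn : 0 ≤ B0 := le_sup_right
  -- the comparison function and its analytic majorant
  set Θ : EuclideanSpace ℝ (Fin m) → ℝ :=
    fun x => L0 ^ 2 + 2 * B0 ^ 2 + 2 * ‖f x‖ ^ 2 with hΘdef
  have hΘc : Continuous Θ :=
    continuous_const.add (continuous_const.mul (hf.continuous.norm.pow 2))
  obtain ⟨h, hhsm, hhmono, hhone, hhdom⟩ := exists_analytic_majorant Θ hΘc
  -- matrix constant
  set A : ℝ := (∑ p, ∑ q, |(H⁻¹) p q|) + 1 with hAdef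
  have hAsum : 0 ≤ ∑ p, ∑ q, |(H⁻¹) p q| :=
    Finset.sum_nonneg fun p _ => Finset.sum_nonneg fun q _ => abs_nonneg _
  have hApos : 0 < A := by rw [hAdef]; linarith
  have hrow : ∀ i, (∑ q, |(H⁻¹) i q|) ≤ A := by
    intro i
    have h1 : (∑ q, |(H⁻¹) i q|) ≤ ∑ p, ∑ q, |(H⁻¹) p q| :=
      Finset.single_le_sum (f := fun p => ∑ q, |(H⁻¹) p q|)
        (fun p _ => Finset.sum_nonneg fun q _ => abs_nonneg _) (Finset.mem_univ i)
    rw [hAdef]; linarith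
  -- key pointwise estimate
  have key : ∀ v ∈ 𝕍, ∀ u : EuclideanSpace ℝ (Fin m),
      ‖f (v + u) - f v‖ ^ 2 ≤ Θ (v + u) * ‖u‖ ^ 2 := by
    intro v hv u
    have hvR : ‖v‖ ≤ R := by
      have := hR0' hv
      rwa [Metric.mem_closedBall, dist_zero_right] at this
    rcases le_or_gt ‖u‖ 1 with hu | hu
    · -- mean value inequality on the ball of radius R + 1
      have hv1 : v ∈ Metric.closedBall (0 : EuclideanSpace ℝ (Fin m)) (R + 1) := by
        rw [Metric.mem_closedBall, dist_zero_right]; linarith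
      have hv2 : v + u ∈ Metric.closedBall (0 : EuclideanSpace ℝ (Fin m)) (R + 1) := by
        rw [Metric.mem_closedBall, dist_zero_right]
        have := norm_add_le v u
        linarith
      have hmvt := (convex_closedBall (0 : EuclideanSpace ℝ (Fin m))
          (R + 1)).norm_image_sub_le_of_norm_fderiv_le (C := L0)
        (fun x _ => (hf.differentiable (by simp)).differentiableAt)
        (fun x hx => le_trans (hL x hx) le_sup_left) hv1 hv2
      rw [add_sub_cancel_left] at hmvt
      have hdn : (0:ℝ) ≤ ‖f (v + u) - f v‖ := norm_nonneg _
      have hun : (0:ℝ) ≤ ‖u‖ := norm_nonneg _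
      have h2 : ‖f (v + u) - f v‖ ^ 2 ≤ L0 ^ 2 * ‖u‖ ^ 2 := by nlinarith
      have h3 : L0 ^ 2 ≤ Θ (v + u) := by
        have := sq_nonneg B0
        have := sq_nonneg ‖f (v + u)‖
        simp only [hΘdef]
        nlinarith
      calc ‖f (v + u) - f v‖ ^ 2 ≤ L0 ^ 2 * ‖u‖ ^ 2 := h2
        _ ≤ Θ (v + u) * ‖u‖ ^ 2 := mul_le_mul_of_nonneg_right h3 (sq_nonneg _)
    · -- far away: crude bound
      have hfv : ‖f v‖ ≤ B0 := (hB v hv).trans le_sup_left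
      have h1 : ‖f (v + u) - f v‖ ≤ ‖f (v + u)‖ + ‖f v‖ := norm_sub_le _ _
      have ha : (0:ℝ) ≤ ‖f (v + u)‖ := norm_nonneg _
      have hb : (0:ℝ) ≤ ‖f v‖ := norm_nonneg _
      have hd : (0:ℝ) ≤ ‖f (v + u) - f v‖ := norm_nonneg _
      have hd2 : ‖f (v + u) - f v‖ ^ 2 ≤ 2 * ‖f (v + u)‖ ^ 2 + 2 * B0 ^ 2 := by
        nlinarith [sq_nonneg (‖f (v + u)‖ - ‖f v‖)]
      have hθ : 2 * ‖f (v + u)‖ ^ 2 + 2 * B0 ^ 2 ≤ Θ (v + u) := by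
        simp only [hΘdef]
        nlinarith [sq_nonneg L0]
      have hθnn : 0 ≤ Θ (v + u) := le_trans (by positivity) hθ
      have hu2 : 1 ≤ ‖u‖ ^ 2 := by nlinarith
      calc ‖f (v + u) - f v‖ ^ 2 ≤ 2 * ‖f (v + u)‖ ^ 2 + 2 * B0 ^ 2 := hd2
        _ ≤ Θ (v + u) := hθ
        _ = Θ (v + u) * 1 := (mul_one _).symm
        _ ≤ Θ (v + u) * ‖u‖ ^ 2 := mul_le_mul_of_nonneg_left hu2 hθnn
  -- provide the data
  refine ⟨fun _ z => h (2 * R ^ 2 + 2 * A ^ 2 * ‖z‖ ^ 2), 1, N * A ^ 2 + 1, ?_, ?_, one_pos,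
    ?_, ?_⟩
  · intro i
    exact hhsm.comp (contDiff_const.add (contDiff_const.mul (contDiff_norm_sq ℝ)))
  · intro i z
    have := hhone (2 * R ^ 2 + 2 * A ^ 2 * ‖z‖ ^ 2) (by positivity)
    linarith
  · positivity
  · intro v hv vhat z hz
    rcases isEmpty_or_nonempty (Fin N) with hN | hN
    · simp
    -- index of maximal ‖z j‖
    obtain ⟨js, _, hjs⟩ := Finset.exists_max_image Finset.univ (fun j => ‖z j‖)
      Finset.univ_nonempty
    -- recover the estimation errors from the disagreement signals
    have hdet : IsUnit H.det := isUnit_iff_ne_zero.mpr (ne_of_gt hH.det_pos)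
    have hsa : ∀ (g : Fin N → EuclideanSpace ℝ (Fin m)) (κ : Fin m),
        (∑ x, g x) κ = ∑ x, g x κ := by
      intro g κ
      exact map_sum (EuclideanSpace.proj κ (𝕜 := ℝ)) g Finset.univ
    have hw : ∀ i, vhat i - v = -(∑ j, (H⁻¹) i j • z j) := by
      intro i
      ext κ
      have hWZ : H.mulVec (fun j => (vhat j - v) κ) = fun i' => -(z i' κ) := by
        funext i'
        have h2 := congrArg (fun t : EuclideanSpace ℝ (Fin m) => t κ) (hz i')
        simp only [PiLp.neg_apply, hsa, PiLp.smul_apply, smul_eq_mul] at h2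
        simp only [Matrix.mulVec, dotProduct]
        rw [h2]
        simp
      have hWrec : (fun j => (vhat j - v) κ) = (H⁻¹).mulVec (fun i' => -(z i' κ)) := by
        rw [← hWZ, Matrix.mulVec_mulVec, Matrix.nonsing_inv_mul H hdet, Matrix.one_mulVec]
      have h2 := congrFun hWrec i
      simp only [Matrix.mulVec, dotProduct, mul_neg] at h2
      rw [h2]
      simp [PiLp.neg_apply, hsa, PiLp.smul_apply, smul_eq_mul]
    -- norm bound on the estimation errors
    have hwn : ∀ i, ‖vhat i - v‖ ≤ A * ‖z js‖ := by
      intro i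
      rw [hw i, norm_neg]
      calc ‖∑ j, (H⁻¹) i j • z j‖ ≤ ∑ j, ‖(H⁻¹) i j • z j‖ := norm_sum_le _ _
        _ = ∑ j, |(H⁻¹) i j| * ‖z j‖ := by
            simp [norm_smul, Real.norm_eq_abs]
        _ ≤ ∑ j, |(H⁻¹) i j| * ‖z js‖ := Finset.sum_le_sum fun j _ =>
            mul_le_mul_of_nonneg_left (hjs j (Finset.mem_univ j)) (abs_nonneg _)
        _ = (∑ j, |(H⁻¹) i j|) * ‖z js‖ := (Finset.sum_mul _ _ _).symm
        _ ≤ A * ‖z js‖ := mul_le_mul_of_nonneg_right (hrow i) (norm_nonneg _)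
    set γs : ℝ := h (2 * R ^ 2 + 2 * A ^ 2 * ‖z js‖ ^ 2) with hγsdef
    have hγsnn : 0 ≤ γs := le_trans zero_le_one (hhone _ (by positivity))
    have hvR : ‖v‖ ≤ R := by
      have := hR0' hv
      rwa [Metric.mem_closedBall, dist_zero_right] at this
    -- per-agent bound
    have hterm : ∀ i, ‖f (vhat i) - f v‖ ^ 2 ≤ A ^ 2 * (γs * ‖z js‖ ^ 2) := by
      intro i
      have hre : v + (vhat i - v) = vhat i := by abel
      have hk1 := key v hv (vhat i - v)
      rw [hre] at hk1
      have hΘb : Θ (vhat i) ≤ γs := by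
        refine (hhdom (vhat i)).trans (hhmono _ _ (by positivity) ?_)
        have h1 : ‖vhat i‖ ≤ ‖v‖ + ‖vhat i - v‖ := by
          have h2 := norm_add_le v (vhat i - v)
          rwa [hre] at h2
        have h2 := hwn i
        have hzn : (0:ℝ) ≤ ‖z js‖ := norm_nonneg _
        have h3 : ‖vhat i‖ ≤ R + A * ‖z js‖ := by linarith
        nlinarith [sq_nonneg (R - A * ‖z js‖), norm_nonneg (vhat i),
          mul_self_le_mul_self (norm_nonneg (vhat i)) h3]
      have hwsq : ‖vhat i - v‖ ^ 2 ≤ (A * ‖z js‖) ^ 2 := by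
        nlinarith [hwn i, norm_nonneg (vhat i - v),
          mul_nonneg hApos.le (norm_nonneg (z js))]
      calc ‖f (vhat i) - f v‖ ^ 2 ≤ Θ (vhat i) * ‖vhat i - v‖ ^ 2 := hk1
        _ ≤ γs * (A * ‖z js‖) ^ 2 := mul_le_mul hΘb hwsq (sq_nonneg _) hγsnn
        _ = A ^ 2 * (γs * ‖z js‖ ^ 2) := by ring
    -- sum up
    have hsum : (∑ i, ‖f (vhat i) - f v‖ ^ 2) ≤ (N : ℝ) * (A ^ 2 * (γs * ‖z js‖ ^ 2)) := by
      calc (∑ i, ‖f (vhat i) - f v‖ ^ 2)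
          ≤ ∑ _i : Fin N, A ^ 2 * (γs * ‖z js‖ ^ 2) :=
            Finset.sum_le_sum fun i _ => hterm i
        _ = (N : ℝ) * (A ^ 2 * (γs * ‖z js‖ ^ 2)) := by
            rw [Finset.sum_const, Finset.card_univ, Fintype.card_fin, nsmul_eq_mul]
    have hγnn : ∀ j, 0 ≤ h (2 * R ^ 2 + 2 * A ^ 2 * ‖z j‖ ^ 2) * ‖z j‖ ^ 2 := by
      intro j
      exact mul_nonneg (le_trans zero_le_one (hhone _ (by positivity))) (sq_nonneg _)
    have hsingle : γs * ‖z js‖ ^ 2 ≤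
        ∑ j, h (2 * R ^ 2 + 2 * A ^ 2 * ‖z j‖ ^ 2) * ‖z j‖ ^ 2 :=
      Finset.single_le_sum (f := fun j => h (2 * R ^ 2 + 2 * A ^ 2 * ‖z j‖ ^ 2) * ‖z j‖ ^ 2)
        (fun j _ => hγnn j) (Finset.mem_univ js)
    have hSnn : 0 ≤ ∑ j, h (2 * R ^ 2 + 2 * A ^ 2 * ‖z j‖ ^ 2) * ‖z j‖ ^ 2 :=
      Finset.sum_nonneg fun j _ => hγnn j
    show (∑ i, ‖f (vhat i) - f v‖ ^ 2) ≤
      (1:ℝ) ^ 2 * ((N : ℝ) * A ^ 2 + 1) * ∑ i, h (2 * R ^ 2 + 2 * A ^ 2 * ‖z i‖ ^ 2) * ‖z i‖ ^ 2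
    calc (∑ i, ‖f (vhat i) - f v‖ ^ 2)
        ≤ (N : ℝ) * (A ^ 2 * (γs * ‖z js‖ ^ 2)) := hsum
      _ = ((N : ℝ) * A ^ 2) * (γs * ‖z js‖ ^ 2) := by ring
      _ ≤ ((N : ℝ) * A ^ 2) * ∑ j, h (2 * R ^ 2 + 2 * A ^ 2 * ‖z j‖ ^ 2) * ‖z j‖ ^ 2 :=
          mul_le_mul_of_nonneg_left hsingle (by positivity)
      _ ≤ ((N : ℝ) * A ^ 2 + 1) * ∑ j, h (2 * R ^ 2 + 2 * A ^ 2 * ‖z j‖ ^ 2) * ‖z j‖ ^ 2 := by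
          nlinarith [hSnn]
      _ = (1:ℝ) ^ 2 * ((N : ℝ) * A ^ 2 + 1) *
          ∑ i, h (2 * R ^ 2 + 2 * A ^ 2 * ‖z i‖ ^ 2) * ‖z i‖ ^ 2 := by ring
end

section
/- Let 𝕍 ⊂ ℝ^m be a compact set, fix ω ∈ ℝ^l, and assume that every component of the map v ↦ φ(v)ω is a polynomial in the coordinates of v of total degree at most m₀, where m₀ ≥ 1. Then there exist positive constants β_M and λ_M such that for every v ∈ 𝕍 and all v̂₁,…,v̂_N ∈ ℝ^m, setting ṽ_i = v̂_i − v and z_i = −Σ_{j=1}^N H_{ij} ṽ_j, one has Σ_{i=1}^N ‖φ(v̂_i)ω − φ(v)ω‖² ≤ β_M² λ_M Σ_{i=1}^N ( Σ_{k=0}^{2m₀−2} ‖z_i‖^k ) ‖z_i‖²; that is, the choice γ_i(z) = Σ_{k=0}^{2m₀−2} ‖z‖^k works. -/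
open Matrix

lemma eucl_norm_sq' {m : ℕ} (x : EuclideanSpace ℝ (Fin m)) : ‖x‖ ^ 2 = ∑ i, (x i) ^ 2 := by
  rw [EuclideanSpace.norm_eq, Real.sq_sqrt (by positivity)]
  simp [sq_abs]

lemma eucl_coord_le' {m : ℕ} (x : EuclideanSpace ℝ (Fin m)) (i : Fin m) : |x i| ≤ ‖x‖ := by
  have h : (x i) ^ 2 ≤ ‖x‖ ^ 2 := by
    rw [eucl_norm_sq']
    exact Finset.single_le_sum (f := fun j => (x j) ^ 2) (fun j _ => sq_nonneg _)
      (Finset.mem_univ i)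
  calc |x i| = Real.sqrt ((x i) ^ 2) := (Real.sqrt_sq_eq_abs _).symm
    _ ≤ Real.sqrt (‖x‖ ^ 2) := Real.sqrt_le_sqrt h
    _ = ‖x‖ := Real.sqrt_sq (norm_nonneg _)

lemma eucl_norm_le_of_coord {m : ℕ} (x : EuclideanSpace ℝ (Fin m)) (B : ℝ) (hB : 0 ≤ B)
    (h : ∀ i, |x i| ≤ B) : ‖x‖ ≤ Real.sqrt m * B := by
  rw [EuclideanSpace.norm_eq]
  have h1 : ∑ i, ‖x i‖ ^ 2 ≤ (m : ℝ) * B ^ 2 := by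
    have step : ∀ i : Fin m, ‖x i‖ ^ 2 ≤ B ^ 2 := fun i => by
      rw [Real.norm_eq_abs]
      exact pow_le_pow_left₀ (abs_nonneg _) (h i) 2
    calc ∑ i, ‖x i‖ ^ 2 ≤ ∑ _i : Fin m, B ^ 2 := Finset.sum_le_sum fun i _ => step i
      _ = (m : ℝ) * B ^ 2 := by
          rw [Finset.sum_const, Finset.card_univ, Fintype.card_fin, nsmul_eq_mul]
  calc Real.sqrt (∑ i, ‖x i‖ ^ 2) ≤ Real.sqrt ((m : ℝ) * B ^ 2) := Real.sqrt_le_sqrt h1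
    _ = Real.sqrt m * B := by
        rw [Real.sqrt_mul (by positivity), Real.sqrt_sq hB]

lemma eucl_sum_apply' {m : ℕ} {ι : Type*} [DecidableEq ι] (s : Finset ι)
    (f : ι → EuclideanSpace ℝ (Fin m)) (a : Fin m) : (∑ x ∈ s, f x) a = ∑ x ∈ s, f x a := by
  induction s using Finset.induction with
  | empty => rfl
  | insert _ _ h ih => rw [Finset.sum_insert h, Finset.sum_insert h, ← ih]; rfl

lemma sum_pow_le_card_pow_mul' {ι : Type*} (s : Finset ι) (f : ι → ℝ)
    (hf : ∀ i ∈ s, 0 ≤ f i) (p : ℕ) (hp : 1 ≤ p) :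
    (∑ i ∈ s, f i) ^ p ≤ (s.card : ℝ) ^ p * ∑ i ∈ s, f i ^ p := by
  rcases s.eq_empty_or_nonempty with rfl | hs
  · simp [zero_pow (by omega : p ≠ 0)]
  · obtain ⟨j, hj, hmax⟩ := s.exists_max_image f hs
    have h1 : ∑ i ∈ s, f i ≤ (s.card : ℝ) * f j := by
      calc ∑ i ∈ s, f i ≤ ∑ _i ∈ s, f j := Finset.sum_le_sum fun i hi => hmax i hi
        _ = (s.card : ℝ) * f j := by rw [Finset.sum_const, nsmul_eq_mul]
    calc (∑ i ∈ s, f i) ^ p ≤ ((s.card : ℝ) * f j) ^ p :=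
          pow_le_pow_left₀ (Finset.sum_nonneg hf) h1 p
      _ = (s.card : ℝ) ^ p * (f j) ^ p := mul_pow _ _ _
      _ ≤ (s.card : ℝ) ^ p * ∑ i ∈ s, f i ^ p := by
          apply mul_le_mul_of_nonneg_left _ (by positivity)
          exact Finset.single_le_sum (fun i hi => pow_nonneg (hf i hi) p) hj

lemma poly_eval_bound' {m : ℕ} (Q : MvPolynomial (Fin m) ℝ) (x : Fin m → ℝ) (M : ℝ)
    (hM : 1 ≤ M) (hx : ∀ i, |x i| ≤ M) :
    |MvPolynomial.eval x Q| ≤ (∑ d ∈ Q.support, |MvPolynomial.coeff d Q|) * M ^ Q.totalDegree := by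
  rw [MvPolynomial.eval_eq']
  calc |∑ d ∈ Q.support, MvPolynomial.coeff d Q * ∏ i, x i ^ d i|
      ≤ ∑ d ∈ Q.support, |MvPolynomial.coeff d Q * ∏ i, x i ^ d i| :=
        Finset.abs_sum_le_sum_abs _ _
    _ ≤ ∑ d ∈ Q.support, |MvPolynomial.coeff d Q| * M ^ Q.totalDegree := by
        apply Finset.sum_le_sum
        intro d hd
        rw [abs_mul]
        apply mul_le_mul_of_nonneg_left _ (abs_nonneg _)
        have h1 : |∏ i, x i ^ d i| ≤ M ^ (∑ i, d i) := by
          rw [Finset.abs_prod]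
          calc ∏ i, |x i ^ d i| = ∏ i, |x i| ^ d i := by simp [abs_pow]
            _ ≤ ∏ i, M ^ d i := Finset.prod_le_prod (fun i _ => by positivity)
                (fun i _ => pow_le_pow_left₀ (abs_nonneg _) (hx i) _)
            _ = M ^ (∑ i, d i) := by rw [Finset.prod_pow_eq_pow_sum]
        refine h1.trans (pow_le_pow_right₀ hM ?_)
        have h2 : (∑ i, d i) = d.sum fun _ e => e := by
          rw [Finsupp.sum_fintype]; intro; rfl
        rw [h2]
        exact MvPolynomial.le_totalDegree hd
    _ = (∑ d ∈ Q.support, |MvPolynomial.coeff d Q|) * M ^ Q.totalDegree := by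
        rw [Finset.sum_mul]

set_option maxHeartbeats 1000000 in
/-- If each component of `v ↦ φ(v)ω` is a polynomial of total degree at most
`m₀ ≥ 1` in the coordinates of `v`, then there are positive constants `β_M`, `λ_M` such
that for `v ∈ 𝕍` (compact) and any `v̂₁,…,v̂_N`, with `z_i = −Σ_j H_{ij}(v̂_j − v)`,
`Σ_i ‖φ(v̂_i)ω − φ(v)ω‖² ≤ β_M² λ_M Σ_i (Σ_{k=0}^{2m₀−2} ‖z_i‖^k) ‖z_i‖²`;
i.e. the choice `γ_i(z) = Σ_{k=0}^{2m₀−2} ‖z‖^k` works. -/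
theorem stmt_4 (m l N m₀ : ℕ) (hm₀ : 1 ≤ m₀)
    (φ : EuclideanSpace ℝ (Fin m) → Matrix (Fin m) (Fin l) ℝ)
    (hφ : ∀ a b, ContDiff ℝ (⊤ : ℕ∞) fun v => φ v a b)
    (ω : EuclideanSpace ℝ (Fin l))
    (P : Fin m → MvPolynomial (Fin m) ℝ)
    (hdeg : ∀ i, (P i).totalDegree ≤ m₀)
    (hP : ∀ (v : EuclideanSpace ℝ (Fin m)) (i : Fin m),
      (φ v).mulVec (EuclideanSpace.equiv (Fin l) ℝ ω) i =
        MvPolynomial.eval (EuclideanSpace.equiv (Fin m) ℝ v) (P i))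
    (H : Matrix (Fin N) (Fin N) ℝ) (hH : H.PosDef)
    (𝕍 : Set (EuclideanSpace ℝ (Fin m))) (h𝕍 : IsCompact 𝕍) :
    ∃ βM lM : ℝ, 0 < βM ∧ 0 < lM ∧
      ∀ v ∈ 𝕍, ∀ vhat : Fin N → EuclideanSpace ℝ (Fin m),
        ∀ z : Fin N → EuclideanSpace ℝ (Fin m),
          (∀ i, z i = -(∑ j, H i j • (vhat j - v))) →
          (∑ i, ‖mApply (φ (vhat i)) ω - mApply (φ v) ω‖ ^ 2) ≤
            βM ^ 2 * lM *
              ∑ i, (∑ k ∈ Finset.range (2 * m₀ - 1), ‖z i‖ ^ k) * ‖z i‖ ^ 2 := by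
  classical
  set f : EuclideanSpace ℝ (Fin m) → EuclideanSpace ℝ (Fin m) :=
    fun u => mApply (φ u) ω with hfdef
  -- bound on the compact set
  obtain ⟨r, hr⟩ := h𝕍.isBounded.subset_closedBall 0
  set R : ℝ := max r 0 with hRdef
  have hR0 : 0 ≤ R := le_max_right _ _
  have hVR : ∀ v ∈ 𝕍, ‖v‖ ≤ R := fun v hv => by
    have := hr hv
    rw [Metric.mem_closedBall, dist_zero_right] at this
    exact this.trans (le_max_left _ _)
  -- smoothness of f
  have hfc : ContDiff ℝ (⊤ : ℕ∞) f := by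
    have hg : ContDiff ℝ (⊤ : ℕ∞) (fun v : EuclideanSpace ℝ (Fin m) => (φ v).mulVec (EuclideanSpace.equiv (Fin l) ℝ ω)) := by
      apply contDiff_pi.2
      intro a
      simp only [Matrix.mulVec, dotProduct]
      exact ContDiff.sum fun b _ =>
        (hφ a b).mul (contDiff_const (c := (EuclideanSpace.equiv (Fin l) ℝ) ω b))
    exact (EuclideanSpace.equiv (Fin m) ℝ).symm.contDiff.comp hg
  -- Lipschitz bound on closedBall 0 (R+1)
  obtain ⟨K, hK⟩ := (isCompact_closedBall (0 : EuclideanSpace ℝ (Fin m)) (R + 1)).exists_bound_of_continuousOn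
    ((hfc.continuous_fderiv (by simp)).continuousOn)
  set K' : ℝ := max K 0 with hK'def
  have hK'0 : 0 ≤ K' := le_max_right _ _
  have hLip : ∀ v ∈ 𝕍, ∀ h : EuclideanSpace ℝ (Fin m), ‖h‖ ≤ 1 → ‖f (v + h) - f v‖ ≤ K' * ‖h‖ := by
    intro v hv h hh
    have hxmem : v ∈ Metric.closedBall (0 : EuclideanSpace ℝ (Fin m)) (R + 1) := by
      rw [Metric.mem_closedBall, dist_zero_right]
      linarith [hVR v hv]
    have hymem : v + h ∈ Metric.closedBall (0 : EuclideanSpace ℝ (Fin m)) (R + 1) := by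
      rw [Metric.mem_closedBall, dist_zero_right]
      calc ‖v + h‖ ≤ ‖v‖ + ‖h‖ := norm_add_le _ _
        _ ≤ R + 1 := add_le_add (hVR v hv) hh
    have := Convex.norm_image_sub_le_of_norm_fderiv_le
      (f := f) (s := Metric.closedBall (0 : EuclideanSpace ℝ (Fin m)) (R + 1)) (C := K')
      (fun x _ => (hfc.differentiable (by simp)).differentiableAt)
      (fun x hx => (hK x hx).trans (le_max_left _ _))
      (convex_closedBall _ _) hxmem hymem
    rwa [add_sub_cancel_left] at this
  -- polynomial growth bound
  set Cb : ℝ := (∑ i, ∑ d ∈ (P i).support, |MvPolynomial.coeff d (P i)|) + 1 with hCbdef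
  have hCb1 : 1 ≤ Cb := by
    have : (0:ℝ) ≤ ∑ i, ∑ d ∈ (P i).support, |MvPolynomial.coeff d (P i)| := by positivity
    simp only [hCbdef]; linarith
  have hCble : ∀ i, (∑ d ∈ (P i).support, |MvPolynomial.coeff d (P i)|) ≤ Cb := by
    intro i
    have h1 : (∑ d ∈ (P i).support, |MvPolynomial.coeff d (P i)|) ≤
        ∑ i, ∑ d ∈ (P i).support, |MvPolynomial.coeff d (P i)| :=
      Finset.single_le_sum (f := fun i => ∑ d ∈ (P i).support, |MvPolynomial.coeff d (P i)|)
        (fun i _ => by positivity) (Finset.mem_univ i)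
    simp only [hCbdef]; linarith
  have hGrow : ∀ (u : EuclideanSpace ℝ (Fin m)) (M : ℝ), 1 ≤ M → ‖u‖ ≤ M → ‖f u‖ ≤ Real.sqrt m * (Cb * M ^ m₀) := by
    intro u M hM hu
    apply eucl_norm_le_of_coord _ _ (by positivity)
    intro i
    have hco : f u i = MvPolynomial.eval (EuclideanSpace.equiv (Fin m) ℝ u) (P i) := hP u i
    rw [hco]
    calc |MvPolynomial.eval (EuclideanSpace.equiv (Fin m) ℝ u) (P i)|
        ≤ (∑ d ∈ (P i).support, |MvPolynomial.coeff d (P i)|) * M ^ (P i).totalDegree :=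
          poly_eval_bound' _ _ M hM (fun a => (eucl_coord_le' u a).trans hu)
      _ ≤ Cb * M ^ m₀ := by
          apply mul_le_mul (hCble i) (pow_le_pow_right₀ hM (hdeg i)) (by positivity)
            (by linarith)
  set A : ℝ := 2 * (Real.sqrt m * (Cb * (R + 1) ^ m₀)) with hAdef
  have hA0 : 0 ≤ A := by positivity
  set C2 : ℝ := K' ^ 2 + A ^ 2 with hC2def
  have hC20 : 0 ≤ C2 := by positivity
  -- key pointwise bound
  have hkey : ∀ v ∈ 𝕍, ∀ h : EuclideanSpace ℝ (Fin m),
      ‖f (v + h) - f v‖ ^ 2 ≤ C2 * ((∑ k ∈ Finset.range (2 * m₀ - 1), ‖h‖ ^ k) * ‖h‖ ^ 2) := by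
    intro v hv h
    set t : ℝ := ‖h‖ with htdef
    have ht0 : 0 ≤ t := norm_nonneg _
    have hγ0 : 0 ≤ (∑ k ∈ Finset.range (2 * m₀ - 1), t ^ k) * t ^ 2 := by positivity
    rcases le_or_gt t 1 with hc | hc
    · have h1 := hLip v hv h hc
      have h2 : ‖f (v + h) - f v‖ ^ 2 ≤ K' ^ 2 * t ^ 2 := by
        calc ‖f (v + h) - f v‖ ^ 2 ≤ (K' * t) ^ 2 :=
            pow_le_pow_left₀ (norm_nonneg _) h1 2
          _ = K' ^ 2 * t ^ 2 := mul_pow _ _ _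
      have h3 : (1:ℝ) ≤ ∑ k ∈ Finset.range (2 * m₀ - 1), t ^ k := by
        have := Finset.single_le_sum (f := fun k => t ^ k)
          (fun k _ => pow_nonneg ht0 k) (Finset.mem_range.2 (by omega : 0 < 2 * m₀ - 1))
        simpa using this
      calc ‖f (v + h) - f v‖ ^ 2 ≤ K' ^ 2 * t ^ 2 := h2
        _ ≤ K' ^ 2 * ((∑ k ∈ Finset.range (2 * m₀ - 1), t ^ k) * t ^ 2) := by
            apply mul_le_mul_of_nonneg_left _ (by positivity)
            nlinarith [sq_nonneg t]
        _ ≤ C2 * ((∑ k ∈ Finset.range (2 * m₀ - 1), t ^ k) * t ^ 2) := by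
            apply mul_le_mul_of_nonneg_right _ hγ0
            simp only [hC2def]; nlinarith [sq_nonneg A]
    · -- large case
      have ht1 : 1 ≤ t := hc.le
      set M : ℝ := (R + 1) * t with hMdef
      have hM1 : 1 ≤ M := by nlinarith
      have hv2 : ‖v‖ ≤ M := by
        have := hVR v hv
        nlinarith
      have hv1 : ‖v + h‖ ≤ M := by
        have h1 : ‖v + h‖ ≤ ‖v‖ + t := norm_add_le _ _
        have := hVR v hv
        nlinarith
      have hb1 := hGrow (v + h) M hM1 hv1
      have hb2 := hGrow v M hM1 hv2
      have hdiff : ‖f (v + h) - f v‖ ≤ A * t ^ m₀ := by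
        calc ‖f (v + h) - f v‖ ≤ ‖f (v + h)‖ + ‖f v‖ := norm_sub_le _ _
          _ ≤ 2 * (Real.sqrt m * (Cb * M ^ m₀)) := by linarith
          _ = A * t ^ m₀ := by
              simp only [hAdef, hMdef, mul_pow]; ring
      have hsq : ‖f (v + h) - f v‖ ^ 2 ≤ A ^ 2 * t ^ (2 * m₀) := by
        calc ‖f (v + h) - f v‖ ^ 2 ≤ (A * t ^ m₀) ^ 2 :=
            pow_le_pow_left₀ (norm_nonneg _) hdiff 2
          _ = A ^ 2 * t ^ (2 * m₀) := by rw [mul_pow, ← pow_mul, mul_comm m₀ 2]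
      have hpow : t ^ (2 * m₀) = t ^ (2 * m₀ - 2) * t ^ 2 := by
        rw [← pow_add]; congr 1; omega
      have h3 : t ^ (2 * m₀ - 2) ≤ ∑ k ∈ Finset.range (2 * m₀ - 1), t ^ k :=
        Finset.single_le_sum (f := fun k => t ^ k) (fun k _ => pow_nonneg ht0 k)
          (Finset.mem_range.2 (by omega : 2 * m₀ - 2 < 2 * m₀ - 1))
      calc ‖f (v + h) - f v‖ ^ 2 ≤ A ^ 2 * t ^ (2 * m₀) := hsq
        _ = A ^ 2 * (t ^ (2 * m₀ - 2) * t ^ 2) := by rw [hpow]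
        _ ≤ A ^ 2 * ((∑ k ∈ Finset.range (2 * m₀ - 1), t ^ k) * t ^ 2) := by
            apply mul_le_mul_of_nonneg_left _ (by positivity)
            apply mul_le_mul_of_nonneg_right h3 (by positivity)
        _ ≤ C2 * ((∑ k ∈ Finset.range (2 * m₀ - 1), t ^ k) * t ^ 2) := by
            apply mul_le_mul_of_nonneg_right _ hγ0
            simp only [hC2def]; nlinarith [sq_nonneg K']
  -- constants for the z-relation
  set G : Matrix (Fin N) (Fin N) ℝ := H⁻¹ with hGdef
  set c : ℝ := (∑ j, ∑ i, |G j i|) + 1 with hcdef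
  have hc1 : 1 ≤ c := by
    have : (0:ℝ) ≤ ∑ j, ∑ i, |G j i| := by positivity
    simp only [hcdef]; linarith
  have hc0 : 0 ≤ c := by linarith
  have hGle : ∀ j i, |G j i| ≤ c := by
    intro j i
    have h1 : |G j i| ≤ ∑ i, |G j i| :=
      Finset.single_le_sum (f := fun i => |G j i|) (fun _ _ => abs_nonneg _) (Finset.mem_univ i)
    have h2 : (∑ i, |G j i|) ≤ ∑ j, ∑ i, |G j i| :=
      Finset.single_le_sum (f := fun j => ∑ i, |G j i|) (fun _ _ => by positivity)
        (Finset.mem_univ j)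
    simp only [hcdef]; linarith
  -- final constants
  refine ⟨1, (N : ℝ) * C2 * c ^ (2 * m₀) * ((N : ℝ) + 1) ^ (2 * m₀) + 1, one_pos, by positivity,
    ?_⟩
  intro v hv vhat z hz
  set γ : ℝ → ℝ := fun t => (∑ k ∈ Finset.range (2 * m₀ - 1), t ^ k) * t ^ 2 with hγdef
  have hγ0 : ∀ t : ℝ, 0 ≤ t → 0 ≤ γ t := by
    intro t ht; simp only [hγdef]; positivity
  have hγmono : ∀ s t : ℝ, 0 ≤ s → s ≤ t → γ s ≤ γ t := by
    intro s t hs hst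
    simp only [hγdef]
    apply mul_le_mul (Finset.sum_le_sum fun k _ => pow_le_pow_left₀ hs hst k)
      (pow_le_pow_left₀ hs hst 2) (by positivity)
      (Finset.sum_nonneg fun k _ => pow_nonneg (hs.trans hst) k)
  have hdet : IsUnit H.det := hH.det_pos.ne'.isUnit
  -- recover vhat j - v from z
  have hvz : ∀ j, vhat j - v = ∑ i, (-(G j i)) • z i := by
    intro j
    ext a
    have key : ∀ jj, (vhat jj - v) a = -(G.mulVec (fun i => z i a)) jj := by
      have hzz : (fun i => z i a) = -(H.mulVec (fun jj => (vhat jj - v) a)) := by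
        funext i
        rw [hz i]
        have h1 : (-(∑ j, H i j • (vhat j - v))) a = -((∑ j, H i j • (vhat j - v)) a) := rfl
        have h2 : (∑ j, H i j • (vhat j - v)) a = ∑ j, H i j * (vhat j - v) a := by
          rw [eucl_sum_apply']
          exact Finset.sum_congr rfl fun j _ => rfl
        show (-(∑ j, H i j • (vhat j - v))) a = _
        rw [h1, h2]
        simp [Matrix.mulVec, dotProduct]
      intro jj
      rw [hzz, Matrix.mulVec_neg, Matrix.mulVec_mulVec, hGdef, Matrix.nonsing_inv_mul H hdet,
        Matrix.one_mulVec]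
      simp
    rw [eucl_sum_apply']
    rw [key j]
    simp [Matrix.mulVec, dotProduct]
  set D : ℝ := ∑ i, ‖z i‖ with hDdef
  have hD0 : 0 ≤ D := by positivity
  have hvD : ∀ j, ‖vhat j - v‖ ≤ c * D := by
    intro j
    rw [hvz j]
    calc ‖∑ i, (-(G j i)) • z i‖ ≤ ∑ i, ‖(-(G j i)) • z i‖ := norm_sum_le _ _
      _ = ∑ i, |G j i| * ‖z i‖ := by
          refine Finset.sum_congr rfl fun i _ => ?_
          rw [norm_smul, Real.norm_eq_abs, abs_neg]
      _ ≤ ∑ i, c * ‖z i‖ := Finset.sum_le_sum fun i _ =>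
          mul_le_mul_of_nonneg_right (hGle j i) (norm_nonneg _)
      _ = c * D := by rw [← Finset.mul_sum]
  -- expand γ as a sum of pure powers
  have hexpand : ∀ t : ℝ, γ t = ∑ k ∈ Finset.range (2 * m₀ - 1), t ^ (k + 2) := by
    intro t
    simp only [hγdef]
    rw [Finset.sum_mul]
    exact Finset.sum_congr rfl fun k _ => (pow_add t k 2).symm
  -- bound γ (c * D) by the sum of γ (‖z j‖)
  have hγcD : γ (c * D) ≤ c ^ (2 * m₀) * ((N : ℝ) + 1) ^ (2 * m₀) * ∑ j, γ ‖z j‖ := by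
    rw [hexpand]
    have hterm : ∀ k ∈ Finset.range (2 * m₀ - 1),
        (c * D) ^ (k + 2) ≤ c ^ (2 * m₀) * ((N : ℝ) + 1) ^ (2 * m₀) * ∑ j, ‖z j‖ ^ (k + 2) := by
      intro k hk
      rw [Finset.mem_range] at hk
      have hk2 : k + 2 ≤ 2 * m₀ := by omega
      have h1 : (c * D) ^ (k + 2) = c ^ (k + 2) * D ^ (k + 2) := mul_pow _ _ _
      have h2 : c ^ (k + 2) ≤ c ^ (2 * m₀) := pow_le_pow_right₀ hc1 hk2
      have h3 : D ^ (k + 2) ≤ ((N : ℝ)) ^ (k + 2) * ∑ j, ‖z j‖ ^ (k + 2) := by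
        have := sum_pow_le_card_pow_mul' Finset.univ (fun j => ‖z j‖)
          (fun _ _ => norm_nonneg _) (k + 2) (by omega)
        simpa using this
      have h4 : ((N : ℝ)) ^ (k + 2) ≤ ((N : ℝ) + 1) ^ (2 * m₀) := by
        calc ((N : ℝ)) ^ (k + 2) ≤ ((N : ℝ) + 1) ^ (k + 2) :=
            pow_le_pow_left₀ (by positivity) (by linarith) _
          _ ≤ ((N : ℝ) + 1) ^ (2 * m₀) :=
            pow_le_pow_right₀ (by linarith [Nat.cast_nonneg (α := ℝ) N]) hk2
      have hsnn : (0:ℝ) ≤ ∑ j, ‖z j‖ ^ (k + 2) := by positivity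
      calc (c * D) ^ (k + 2) = c ^ (k + 2) * D ^ (k + 2) := h1
        _ ≤ c ^ (2 * m₀) * (((N : ℝ)) ^ (k + 2) * ∑ j, ‖z j‖ ^ (k + 2)) := by
            apply mul_le_mul h2 h3 (by positivity) (by positivity)
        _ ≤ c ^ (2 * m₀) * (((N : ℝ) + 1) ^ (2 * m₀) * ∑ j, ‖z j‖ ^ (k + 2)) := by
            apply mul_le_mul_of_nonneg_left _ (by positivity)
            exact mul_le_mul_of_nonneg_right h4 hsnn
        _ = c ^ (2 * m₀) * ((N : ℝ) + 1) ^ (2 * m₀) * ∑ j, ‖z j‖ ^ (k + 2) := by ring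
    calc ∑ k ∈ Finset.range (2 * m₀ - 1), (c * D) ^ (k + 2)
        ≤ ∑ k ∈ Finset.range (2 * m₀ - 1),
            c ^ (2 * m₀) * ((N : ℝ) + 1) ^ (2 * m₀) * ∑ j, ‖z j‖ ^ (k + 2) :=
          Finset.sum_le_sum hterm
      _ = c ^ (2 * m₀) * ((N : ℝ) + 1) ^ (2 * m₀) *
            ∑ k ∈ Finset.range (2 * m₀ - 1), ∑ j, ‖z j‖ ^ (k + 2) := by
          rw [Finset.mul_sum]
      _ = c ^ (2 * m₀) * ((N : ℝ) + 1) ^ (2 * m₀) * ∑ j, γ ‖z j‖ := by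
          congr 1
          rw [Finset.sum_comm]
          exact Finset.sum_congr rfl fun j _ => (hexpand ‖z j‖).symm
  -- assemble
  have hmain : ∀ i, ‖f (vhat i) - f v‖ ^ 2 ≤ C2 * γ (c * D) := by
    intro i
    have h1 : vhat i = v + (vhat i - v) := by abel
    calc ‖f (vhat i) - f v‖ ^ 2 = ‖f (v + (vhat i - v)) - f v‖ ^ 2 := by rw [← h1]
      _ ≤ C2 * γ ‖vhat i - v‖ := hkey v hv (vhat i - v)
      _ ≤ C2 * γ (c * D) :=
          mul_le_mul_of_nonneg_left (hγmono _ _ (norm_nonneg _) (hvD i)) hC20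
  have hγsum0 : 0 ≤ ∑ j, γ ‖z j‖ := Finset.sum_nonneg fun j _ => hγ0 _ (norm_nonneg _)
  calc (∑ i, ‖f (vhat i) - f v‖ ^ 2) ≤ ∑ _i : Fin N, C2 * γ (c * D) :=
        Finset.sum_le_sum fun i _ => hmain i
    _ = (N : ℝ) * (C2 * γ (c * D)) := by
        rw [Finset.sum_const, Finset.card_univ, Fintype.card_fin, nsmul_eq_mul]
    _ ≤ (N : ℝ) * (C2 * (c ^ (2 * m₀) * ((N : ℝ) + 1) ^ (2 * m₀) * ∑ j, γ ‖z j‖)) := by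
        apply mul_le_mul_of_nonneg_left _ (by positivity)
        exact mul_le_mul_of_nonneg_left hγcD hC20
    _ = ((N : ℝ) * C2 * c ^ (2 * m₀) * ((N : ℝ) + 1) ^ (2 * m₀)) * ∑ j, γ ‖z j‖ := by ring
    _ ≤ (1 : ℝ) ^ 2 * ((N : ℝ) * C2 * c ^ (2 * m₀) * ((N : ℝ) + 1) ^ (2 * m₀) + 1) *
          ∑ j, γ ‖z j‖ := by
        apply mul_le_mul_of_nonneg_right _ hγsum0
        nlinarith
    _ = (1 : ℝ) ^ 2 * ((N : ℝ) * C2 * c ^ (2 * m₀) * ((N : ℝ) + 1) ^ (2 * m₀) + 1) *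
          ∑ i, (∑ k ∈ Finset.range (2 * m₀ - 1), ‖z i‖ ^ k) * ‖z i‖ ^ 2 := rfl
end

section
/- Let φ : [0,∞) → ℝ^{m×l} be continuous and bounded, and suppose t ↦ φ(t)^T is persistently exciting, i.e. there exist constants ε > 0, t₀ ≥ 0 and T₀ > 0 such that (1/T₀) ∫_t^{t+T₀} φ(s)^T φ(s) ds ⪰ ε I_l for all t ≥ t₀. Let e : [0,∞) → ℝ^l be continuously differentiable with e'(t) → 0 and φ(t)e(t) → 0 as t → ∞. Then e(t) → 0 as t → ∞. -/
/-
On a window `[t, t + T₀]` the signal `e` drifts by at most `T₀ · sup ‖e'‖`, so with `M` a bound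
for the action of `φ`, `‖φ(s) e(t)‖ ≤ ‖φ(s) e(s)‖ + M T₀ sup ‖e'‖` is eventually small on the
whole window. Persistent excitation, tested against the fixed vector `e(t)`, gives
`ε T₀ ‖e(t)‖² ≤ ∫_t^{t+T₀} ‖φ(s) e(t)‖² ds`, which forces `e(t)` to be small as well.
-/

open Matrix Filter MeasureTheory

/-- Entrywise interval integral of a matrix-valued function. -/
noncomputable def matIntegral {k k' : ℕ} (f : ℝ → Matrix (Fin k) (Fin k') ℝ) (a b : ℝ) :
    Matrix (Fin k) (Fin k') ℝ :=
  Matrix.of fun i j => ∫ s in a..b, f s i j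

/-- A matrix-valued signal `f` is persistently exciting if
`(1/T₀) ∫_t^{t+T₀} f(s) f(s)ᵀ ds ⪰ ε I` for all `t ≥ t₀`. -/
def PersistentlyExciting {k k' : ℕ} (f : ℝ → Matrix (Fin k) (Fin k') ℝ) : Prop :=
  ∃ ε : ℝ, 0 < ε ∧ ∃ t₀ : ℝ, 0 ≤ t₀ ∧ ∃ T₀ : ℝ, 0 < T₀ ∧ ∀ t, t₀ ≤ t →
    ((1 / T₀) • matIntegral (fun s => f s * (f s)ᵀ) t (t + T₀) -
      ε • (1 : Matrix (Fin k) (Fin k) ℝ)).PosSemidef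

lemma EuclideanSpace.dotProduct_self_eq_norm_sq {ι : Type*} [Fintype ι] (x : EuclideanSpace ℝ ι) :
    x.ofLp ⬝ᵥ x.ofLp = ‖x‖ ^ 2 := by
  simp only [EuclideanSpace.norm_sq_eq, Real.norm_eq_abs, sq_abs]
  simp only [dotProduct, sq]

section mApply

variable {k l : ℕ}

lemma mApply_sub (A : Matrix (Fin k) (Fin l) ℝ) (x y : EuclideanSpace ℝ (Fin l)) :
    mApply A (x - y) = mApply A x - mApply A y :=
  map_sub (toEuclideanLin A) x y

lemma norm_sq_mApply (A : Matrix (Fin k) (Fin l) ℝ) (x : EuclideanSpace ℝ (Fin l)) :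
    ‖mApply A x‖ ^ 2 = ∑ i, (A *ᵥ x.ofLp) i ^ 2 := by
  simp only [EuclideanSpace.norm_sq_eq, Real.norm_eq_abs, sq_abs]
  rfl

lemma dotProduct_transpose_mul_self_mulVec (A : Matrix (Fin k) (Fin l) ℝ)
    (x : EuclideanSpace ℝ (Fin l)) :
    x.ofLp ⬝ᵥ (Aᵀ * A) *ᵥ x.ofLp = ‖mApply A x‖ ^ 2 := by
  rw [← mulVec_mulVec, dotProduct_mulVec, vecMul_transpose]
  exact EuclideanSpace.dotProduct_self_eq_norm_sq (mApply A x)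

lemma norm_mApply_le_of_abs_le {C : ℝ} (hC : 0 ≤ C) (A : Matrix (Fin k) (Fin l) ℝ)
    (hA : ∀ i j, |A i j| ≤ C) (x : EuclideanSpace ℝ (Fin l)) :
    ‖mApply A x‖ ≤ √(k * l) * C * ‖x‖ := by
  have hrow : ∀ i, (A *ᵥ x.ofLp) i ^ 2 ≤ l * C ^ 2 * ‖x‖ ^ 2 := fun i => calc
    (A *ᵥ x.ofLp) i ^ 2 = (∑ j, A i j * x.ofLp j) ^ 2 := rfl
    _ ≤ (∑ j, A i j ^ 2) * ∑ j, x.ofLp j ^ 2 :=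
      Finset.sum_mul_sq_le_sq_mul_sq _ (A i) x.ofLp
    _ ≤ (∑ _j : Fin l, C ^ 2) * ‖x‖ ^ 2 := by
      rw [EuclideanSpace.norm_sq_eq]
      simp only [Real.norm_eq_abs, sq_abs]
      refine mul_le_mul_of_nonneg_right (Finset.sum_le_sum fun j _ => ?_) (by positivity)
      exact sq_le_sq' (abs_le.1 (hA i j)).1 (abs_le.1 (hA i j)).2
    _ = l * C ^ 2 * ‖x‖ ^ 2 := by simp
  have hsq : ‖mApply A x‖ ^ 2 ≤ (√(k * l) * C * ‖x‖) ^ 2 := by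
    rw [norm_sq_mApply, mul_pow, mul_pow, Real.sq_sqrt (by positivity)]
    calc ∑ i, (A *ᵥ x.ofLp) i ^ 2 ≤ ∑ _i : Fin k, l * C ^ 2 * ‖x‖ ^ 2 :=
          Finset.sum_le_sum fun i _ => hrow i
      _ = k * l * C ^ 2 * ‖x‖ ^ 2 := by simp; ring
  exact le_of_sq_le_sq hsq (by positivity)

end mApply

lemma dotProduct_matIntegral_mulVec {k k' : ℕ} {g : ℝ → Matrix (Fin k) (Fin k') ℝ} {a b : ℝ}
    (hg : ∀ i j, IntervalIntegrable (fun s => g s i j) volume a b) (u : Fin k → ℝ)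
    (v : Fin k' → ℝ) :
    u ⬝ᵥ matIntegral g a b *ᵥ v = ∫ s in a..b, u ⬝ᵥ g s *ᵥ v := by
  have hint : ∀ i j, IntervalIntegrable (fun s => u i * (g s i j * v j)) volume a b :=
    fun i j => ((hg i j).mul_const _).const_mul _
  simp only [dotProduct, mulVec, matIntegral, of_apply, Finset.mul_sum]
  rw [intervalIntegral.integral_finsetSum fun i _ => by
    simpa only [Finset.sum_fn] using IntervalIntegrable.sum Finset.univ fun j _ => hint i j]
  refine Finset.sum_congr rfl fun i _ => ?_
  rw [intervalIntegral.integral_finsetSum fun j _ => hint i j]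
  refine Finset.sum_congr rfl fun j _ => ?_
  rw [intervalIntegral.integral_const_mul, intervalIntegral.integral_mul_const]

lemma PersistentlyExciting.mul_norm_sq_le_integral {m l : ℕ} {φ : ℝ → Matrix (Fin m) (Fin l) ℝ}
    (hφc : ∀ i j, Continuous fun t => φ t i j) (hPE : PersistentlyExciting fun t => (φ t)ᵀ) :
    ∃ ε > 0, ∃ t₀ T₀ : ℝ, 0 < T₀ ∧ ∀ t ≥ t₀, ∀ x : EuclideanSpace ℝ (Fin l),
      ε * T₀ * ‖x‖ ^ 2 ≤ ∫ s in t..t + T₀, ‖mApply (φ s) x‖ ^ 2 := by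
  obtain ⟨ε, hε, t₀, -, T₀, hT₀, hPE⟩ := hPE
  refine ⟨ε, hε, t₀, T₀, hT₀, fun t ht x => ?_⟩
  have hφ : Continuous φ := continuous_pi fun i => continuous_pi fun j => hφc i j
  have hint : ∀ i j, IntervalIntegrable (fun s => ((φ s)ᵀ * φ s) i j) volume t (t + T₀) :=
    fun i j => ((hφ.matrix_transpose.matrix_mul hφ).matrix_elem i j).intervalIntegrable _ _
  have h := (hPE t ht).dotProduct_mulVec_nonneg x.ofLp
  simp only [transpose_transpose, star_trivial, sub_mulVec, smul_mulVec, dotProduct_sub,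
    dotProduct_smul, one_mulVec, smul_eq_mul, dotProduct_matIntegral_mulVec hint,
    dotProduct_transpose_mul_self_mulVec, EuclideanSpace.dotProduct_self_eq_norm_sq] at h
  rw [one_div, sub_nonneg, inv_mul_eq_div, le_div_iff₀ hT₀] at h
  linarith

lemma tendsto_zero_of_forall_eventually_norm_le {α E : Type*} [SeminormedAddGroup E]
    {f : α → E} {l : Filter α} {K : ℝ} (h : ∀ δ > 0, ∀ᶠ x in l, ‖f x‖ ≤ K * δ) :
    Tendsto f l (nhds 0) := by
  refine NormedAddGroup.tendsto_nhds_zero.2 fun η hη => ?_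
  have hK : 0 < |K| + 1 := by positivity
  filter_upwards [h (η / (2 * (|K| + 1))) (by positivity)] with x hx
  calc ‖f x‖ ≤ K * (η / (2 * (|K| + 1))) := hx
    _ ≤ (|K| + 1) * (η / (2 * (|K| + 1))) := by gcongr; linarith [le_abs_self K]
    _ = η / 2 := by field_simp
    _ < η := half_lt_self hη

lemma norm_mApply_le_of_norm_deriv_le {k l : ℕ} {A : Matrix (Fin k) (Fin l) ℝ}
    {e e' : ℝ → EuclideanSpace ℝ (Fin l)} {t s M δ : ℝ} (hts : t ≤ s) (hM : 0 ≤ M)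
    (hA : ∀ x, ‖mApply A x‖ ≤ M * ‖x‖) (he : ∀ u ∈ Set.Icc t s, HasDerivAt e (e' u) u)
    (he' : ∀ u ∈ Set.Icc t s, ‖e' u‖ ≤ δ) :
    ‖mApply A (e t)‖ ≤ ‖mApply A (e s)‖ + M * (δ * (s - t)) := by
  have hdrift : ‖e t - e s‖ ≤ δ * (s - t) := by
    have := (convex_Icc t s).norm_image_sub_le_of_norm_hasDerivWithin_le
      (fun u hu => (he u hu).hasDerivWithinAt) he' (Set.right_mem_Icc.2 hts)
      (Set.left_mem_Icc.2 hts)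
    rwa [Real.norm_eq_abs, abs_sub_comm, abs_of_nonneg (sub_nonneg.2 hts)] at this
  calc ‖mApply A (e t)‖ = ‖mApply A (e s) + mApply A (e t - e s)‖ := by
        rw [mApply_sub, add_sub_cancel]
    _ ≤ ‖mApply A (e s)‖ + M * (δ * (s - t)) :=
        (norm_add_le _ _).trans (add_le_add_right ((hA _).trans (by gcongr)) _)

lemma norm_le_of_excitation_window {m l : ℕ} {φ : ℝ → Matrix (Fin m) (Fin l) ℝ}
    {e e' : ℝ → EuclideanSpace ℝ (Fin l)} {t T ε M δ : ℝ} (hε : 0 < ε) (hT : 0 < T)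
    (hM : 0 ≤ M) (hPE : ε * T * ‖e t‖ ^ 2 ≤ ∫ s in t..t + T, ‖mApply (φ s) (e t)‖ ^ 2)
    (hφM : ∀ s ∈ Set.Icc t (t + T), ∀ x, ‖mApply (φ s) x‖ ≤ M * ‖x‖)
    (he : ∀ s ∈ Set.Icc t (t + T), HasDerivAt e (e' s) s)
    (he' : ∀ s ∈ Set.Icc t (t + T), ‖e' s‖ ≤ δ)
    (hφe : ∀ s ∈ Set.Icc t (t + T), ‖mApply (φ s) (e s)‖ ≤ δ) :
    ‖e t‖ ≤ (1 + M * T) / √ε * δ := by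
  have hδ : 0 ≤ δ := (norm_nonneg _).trans (he' t (Set.left_mem_Icc.2 (by linarith)))
  have hptw : ∀ s ∈ Set.Ioc t (t + T), ‖‖mApply (φ s) (e t)‖ ^ 2‖ ≤ ((1 + M * T) * δ) ^ 2 := by
    intro s ⟨hts, hsT⟩
    have hIcc : Set.Icc t s ⊆ Set.Icc t (t + T) := Set.Icc_subset_Icc_right hsT
    have hs : s ∈ Set.Icc t (t + T) := ⟨hts.le, hsT⟩
    have := norm_mApply_le_of_norm_deriv_le hts.le hM (hφM s hs)
      (fun u hu => he u (hIcc hu)) (fun u hu => he' u (hIcc hu))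
    rw [norm_pow, norm_norm]
    gcongr
    calc ‖mApply (φ s) (e t)‖ ≤ ‖mApply (φ s) (e s)‖ + M * (δ * (s - t)) := this
      _ ≤ δ + M * (δ * T) := by gcongr; exacts [hφe s hs, by linarith]
      _ = (1 + M * T) * δ := by ring
  have hint : ∫ s in t..t + T, ‖mApply (φ s) (e t)‖ ^ 2 ≤ ((1 + M * T) * δ) ^ 2 * T := by
    have := intervalIntegral.norm_integral_le_of_norm_le_const
      (Set.uIoc_of_le (by linarith : t ≤ t + T) ▸ hptw)
    rw [add_sub_cancel_left, abs_of_pos hT] at this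
    exact (le_abs_self _).trans this
  have hsq : (√ε * ‖e t‖) ^ 2 ≤ ((1 + M * T) * δ) ^ 2 := by
    rw [mul_pow, Real.sq_sqrt hε.le]
    nlinarith
  rw [div_mul_eq_mul_div, le_div_iff₀ (Real.sqrt_pos.2 hε), mul_comm]
  exact le_of_sq_le_sq hsq (by positivity)

theorem stmt_10_general (m l : ℕ) (φ : ℝ → Matrix (Fin m) (Fin l) ℝ)
    (hφc : ∀ i j, Continuous fun t => φ t i j)
    (hφb : ∃ C, ∀ t, 0 ≤ t → ∀ i j, |φ t i j| ≤ C)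
    (hPE : PersistentlyExciting fun t => (φ t)ᵀ)
    (e e' : ℝ → EuclideanSpace ℝ (Fin l))
    (he : ∀ t, 0 ≤ t → HasDerivAt e (e' t) t)
    (he'0 : Tendsto e' atTop (nhds 0))
    (hφe : Tendsto (fun t => mApply (φ t) (e t)) atTop (nhds 0)) :
    Tendsto e atTop (nhds 0) := by
  obtain ⟨C, hC⟩ := hφb
  obtain ⟨M, hM, hφM⟩ : ∃ M, 0 ≤ M ∧ ∀ s, 0 ≤ s → ∀ x, ‖mApply (φ s) x‖ ≤ M * ‖x‖ :=
    ⟨_, by positivity, fun s hs => norm_mApply_le_of_abs_le (le_max_right C 0) _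
      fun i j => (hC s hs i j).trans (le_max_left _ _)⟩
  obtain ⟨ε, hε, t₀, T₀, hT₀, hPE⟩ := hPE.mul_norm_sq_le_integral hφc
  refine tendsto_zero_of_forall_eventually_norm_le (K := (1 + M * T₀) / √ε) fun δ hδ => ?_
  have eventually_small {k : ℕ} {g : ℝ → EuclideanSpace ℝ (Fin k)}
      (hg : Tendsto g atTop (nhds 0)) : ∀ᶠ t in atTop, ∀ s, t ≤ s → ‖g s‖ ≤ δ :=
    eventually_forall_ge_atTop.2 <|
      (NormedAddGroup.tendsto_nhds_zero.1 hg δ hδ).mono fun _ => le_of_lt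
  filter_upwards [eventually_small he'0, eventually_small hφe, eventually_ge_atTop (max t₀ 0)]
    with t he't hφet ht
  have hs0 : ∀ s ∈ Set.Icc t (t + T₀), 0 ≤ s := fun s hs =>
    (le_max_right _ _).trans (ht.trans hs.1)
  exact norm_le_of_excitation_window hε hT₀ hM
    (hPE t ((le_max_left _ _).trans ht) (e t)) (fun s hs => hφM s (hs0 s hs))
    (fun s hs => he s (hs0 s hs)) (fun s hs => he't s hs.1) (fun s hs => hφet s hs.1)

/-- let `φ : [0,∞) → ℝ^{m×l}` be continuous and bounded with `t ↦ φ(t)ᵀ`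
persistently exciting, and let `e : [0,∞) → ℝ^l` be continuously differentiable with
`e'(t) → 0` and `φ(t)e(t) → 0` as `t → ∞`.  Then `e(t) → 0` as `t → ∞`. -/
theorem stmt_10 (m l : ℕ) (φ : ℝ → Matrix (Fin m) (Fin l) ℝ)
    (hφc : ∀ i j, Continuous fun t => φ t i j)
    (hφb : ∃ C, ∀ t, 0 ≤ t → ∀ i j, |φ t i j| ≤ C)
    (hPE : PersistentlyExciting fun t => (φ t)ᵀ)
    (e e' : ℝ → EuclideanSpace ℝ (Fin l))
    (he : ∀ t, 0 ≤ t → HasDerivAt e (e' t) t)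
    (he'c : ContinuousOn e' (Set.Ici (0 : ℝ)))
    (he'0 : Tendsto e' atTop (nhds 0))
    (hφe : Tendsto (fun t => mApply (φ t) (e t)) atTop (nhds 0)) :
    Tendsto e atTop (nhds 0) :=
  stmt_10_general m l φ hφc hφb hPE e e' he he'0 hφe
end

section
/- Let a, b, c > 0, T > 0, and let v = (v₁, v₂) : ℝ → ℝ² be a non-constant C¹ function with v(t + T) = v(t) for all t, satisfying the Van der Pol oscillator equations v₁'(t) = a v₂(t) and v₂'(t) = −b v₁(t) + c(1 − v₁(t)²)v₂(t) for all t. Then for every t, the 3×3 matrix ∫_t^{t+T} φ(v(s))^T φ(v(s)) ds is positive definite; consequently, the function s ↦ φ(v(s))^T is persistently exciting. -/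
open Matrix Filter MeasureTheory

/-- The regressor matrix of the Van der Pol oscillator:
`φ(v) = [[v₂, 0, 0], [0, −v₁, (1 − v₁²) v₂]]`, so that the right-hand side of the
oscillator equals `φ(v) · col(a,b,c)`. -/
noncomputable def vdpPhi (w : ℝ × ℝ) : Matrix (Fin 2) (Fin 3) ℝ :=
  Matrix.of ![![w.2, 0, 0], ![0, -w.1, (1 - w.1 ^ 2) * w.2]]

/-! The quadratic form of `∫ φᵀφ` over a period at `x` is `∫ |φ(v(s)) x|²`, which by continuity and
periodicity vanishes only if `φ(v(s)) x = 0` for all `s`. The first row forces `x₀ = 0`, since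
`v₂ ≢ 0` (otherwise `v` would be constant). Multiplying the second row by `v₁` and integrating over a
period, the `x₂` term becomes `∫ (1 - v₁²) v₁ v₁' / a = 0`, so `x₁ ∫ v₁² = 0` and `x₁ = 0`.
Finally `x₂ ≠ 0` would give `(1 - v₁²) v₂ ≡ 0`, so `v₁² ≡ 1` near a point where `v₂ ≠ 0`,
contradicting `(v₁²)' = 2 a v₁ v₂ ≠ 0` there. Persistent excitation follows because the integral
over a window of length `T` is the same positive definite matrix for every starting time. -/

open scoped MatrixOrder in
theorem Matrix.PosDef.exists_pos_posSemidef_sub_smul_one {n : Type*} [Fintype n]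
    [DecidableEq n] {M : Matrix n n ℝ} (hM : M.PosDef) :
    ∃ r : ℝ, 0 < r ∧ (M - r • 1).PosSemidef := by
  rcases subsingleton_or_nontrivial (Matrix n n ℝ) with _ | _
  · exact ⟨1, one_pos, Subsingleton.elim 0 (M - (1 : ℝ) • 1) ▸ .zero⟩
  obtain ⟨r, hr, hle⟩ := (CFC.exists_pos_algebraMap_le_iff hM.isHermitian).2
    fun x hx => hM.isStrictlyPositive.spectrum_pos hx
  exact ⟨r, hr, by rwa [Algebra.algebraMap_eq_smul_one, Matrix.le_iff] at hle⟩

theorem Function.Periodic.intervalIntegral_pos {g : ℝ → ℝ} {T : ℝ} (hper : Function.Periodic g T)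
    (hT : 0 < T) (hg : Continuous g) (hnn : ∀ s, 0 ≤ g s) {s₀ : ℝ} (hs₀ : 0 < g s₀) (t : ℝ) :
    0 < ∫ s in t..t + T, g s := by
  obtain ⟨s₁, hs₁, heq⟩ := hper.exists_mem_Ico hT s₀ t
  exact intervalIntegral.integral_pos (by linarith) hg.continuousOn (fun s _ => hnn s)
    ⟨s₁, Set.Ico_subset_Icc_self hs₁, heq ▸ hs₀⟩

theorem Function.Periodic.intervalIntegral_comp_mul_deriv_eq_zero {u u' g : ℝ → ℝ} {T : ℝ}
    (hper : Function.Periodic u T) (hu : ∀ x, HasDerivAt u (u' x) x) (hu' : Continuous u')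
    (hg : Continuous g) (t : ℝ) : ∫ x in t..t + T, g (u x) * u' x = 0 := by
  refine (intervalIntegral.integral_comp_mul_deriv (fun x _ => hu x) hu'.continuousOn hg).trans ?_
  rw [hper t, intervalIntegral.integral_same]

theorem Function.Periodic.matIntegral_add_eq {k k' : ℕ} {f : ℝ → Matrix (Fin k) (Fin k') ℝ}
    {T : ℝ} (hper : Function.Periodic f T) (t t' : ℝ) :
    matIntegral f t (t + T) = matIntegral f t' (t' + T) := by
  ext i j
  have hij : Function.Periodic (f · i j) T := fun u => by simp only [hper u]
  exact hij.intervalIntegral_add_eq t t'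

theorem dotProduct_self_pos {n : Type*} [Fintype n] {v : n → ℝ} (hv : v ≠ 0) : 0 < v ⬝ᵥ v := by
  simpa only [star_trivial] using dotProduct_self_star_pos_iff.2 hv

theorem dotProduct_matIntegral_mulVec_s13 {k : ℕ} {f : ℝ → Matrix (Fin k) (Fin k) ℝ} {t u : ℝ}
    (hf : Continuous f) (x : Fin k → ℝ) :
    x ⬝ᵥ (matIntegral f t u *ᵥ x) = ∫ s in t..u, x ⬝ᵥ (f s *ᵥ x) := by
  have hc : ∀ i j, Continuous fun s => f s i j := hf.matrix_elem
  simp only [dotProduct, mulVec, matIntegral, of_apply]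
  have hint : ∀ {g : ℝ → ℝ}, Continuous g → IntervalIntegrable g volume t u :=
    fun hg => hg.intervalIntegrable t u
  rw [intervalIntegral.integral_finsetSum fun i _ => hint (by fun_prop)]
  refine Finset.sum_congr rfl fun i _ => ?_
  rw [intervalIntegral.integral_const_mul,
    intervalIntegral.integral_finsetSum fun j _ => hint (by fun_prop)]
  simp only [intervalIntegral.integral_mul_const]

theorem posDef_matIntegral_transpose_mul_self {m n : ℕ} {A : ℝ → Matrix (Fin m) (Fin n) ℝ}
    {T : ℝ} (hT : 0 < T) (hA : Continuous A) (hper : Function.Periodic A T)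
    (hker : ∀ x ≠ 0, ∃ s, A s *ᵥ x ≠ 0) (t : ℝ) :
    (matIntegral (fun s => (A s)ᵀ * A s) t (t + T)).PosDef := by
  refine .of_dotProduct_mulVec_pos ?_ fun x hx => ?_
  · refine IsHermitian.ext fun i j => intervalIntegral.integral_congr fun s _ => ?_
    simpa only [conjTranspose_eq_transpose_of_trivial, star_trivial]
      using (isHermitian_conjTranspose_mul_self (A s)).apply i j
  obtain ⟨s₀, hs₀⟩ := hker x hx
  have hquad : ∀ s, x ⬝ᵥ (((A s)ᵀ * A s) *ᵥ x) = (A s *ᵥ x) ⬝ᵥ (A s *ᵥ x) := fun s => by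
    rw [← mulVec_mulVec, dotProduct_mulVec, vecMul_transpose]
  rw [star_trivial, dotProduct_matIntegral_mulVec_s13 (by fun_prop)]
  simp_rw [hquad]
  exact Function.Periodic.intervalIntegral_pos (fun s => by simp only [hper s]) hT
    (by fun_prop) (fun s => by simpa using dotProduct_star_self_nonneg (A s *ᵥ x))
    (dotProduct_self_pos hs₀) t

theorem PersistentlyExciting.of_periodic {k k' : ℕ} {f : ℝ → Matrix (Fin k) (Fin k') ℝ} {T : ℝ}
    (hT : 0 < T) (hper : Function.Periodic f T)
    (hpos : (matIntegral (fun s => f s * (f s)ᵀ) 0 T).PosDef) : PersistentlyExciting f := by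
  obtain ⟨r, hr, hM⟩ := hpos.exists_pos_posSemidef_sub_smul_one
  refine ⟨r / T, div_pos hr hT, 0, le_rfl, T, hT, fun t _ => ?_⟩
  have hgram : Function.Periodic (fun s => f s * (f s)ᵀ) T := fun u => by simp only [hper u]
  have hshift := hgram.matIntegral_add_eq t 0
  rw [hshift, zero_add, one_div, div_eq_inv_mul, mul_smul, ← smul_sub]
  exact hM.smul (inv_nonneg.2 hT.le)

theorem continuous_vdpPhi : Continuous vdpPhi :=
  continuous_pi fun i => continuous_pi fun j => by
    fin_cases i <;> fin_cases j <;> simp only [vdpPhi] <;> fun_prop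

theorem vdpPhi_mulVec (w : ℝ × ℝ) (x : Fin 3 → ℝ) :
    vdpPhi w *ᵥ x = ![w.2 * x 0, -w.1 * x 1 + (1 - w.1 ^ 2) * w.2 * x 2] := by
  ext i
  fin_cases i <;> simp [vdpPhi, mulVec, dotProduct, Fin.sum_univ_succ]

section VanDerPol

variable {a T : ℝ} {v₁ v₂ : ℝ → ℝ}

theorem exists_ne_zero_of_hasDerivAt_of_nonconst (hode1 : ∀ t, HasDerivAt v₁ (a * v₂ t) t)
    (hnonconst : ∃ t s : ℝ, (v₁ t, v₂ t) ≠ (v₁ s, v₂ s)) : ∃ s, v₂ s ≠ 0 := by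
  by_contra! h
  obtain ⟨t, s, hts⟩ := hnonconst
  have hconst : v₁ t = v₁ s := is_const_of_deriv_eq_zero (fun u => (hode1 u).differentiableAt)
    (fun u => by simpa [h u] using (hode1 u).deriv) t s
  exact hts (by rw [hconst, h t, h s])

theorem exists_ne_zero_of_hasDerivAt (ha : a ≠ 0) (hode1 : ∀ t, HasDerivAt v₁ (a * v₂ t) t)
    {s : ℝ} (hs : v₂ s ≠ 0) : ∃ s, v₁ s ≠ 0 := by
  by_contra! h
  have hzero : HasDerivAt v₁ 0 s := (funext h : v₁ = 0) ▸ hasDerivAt_const s 0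
  exact mul_ne_zero ha hs ((hode1 s).unique hzero)

theorem eq_zero_of_one_sub_sq_mul_eq_zero (ha : a ≠ 0) (hv₂ : Continuous v₂)
    (hode1 : ∀ t, HasDerivAt v₁ (a * v₂ t) t) (h : ∀ s, (1 - v₁ s ^ 2) * v₂ s = 0) (s : ℝ) :
    v₂ s = 0 := by
  by_contra hs
  have hsq : (fun y => v₁ y ^ 2) =ᶠ[nhds s] fun _ => 1 := by
    filter_upwards [hv₂.continuousAt.eventually_ne hs] with y hy
    linarith [(mul_eq_zero.1 (h y)).resolve_right hy]
  have hderiv := ((hode1 s).pow 2).unique ((hasDerivAt_const s (1 : ℝ)).congr_of_eventuallyEq hsq)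
  have hv₁ : v₁ s ≠ 0 := fun h0 => by simpa [h0] using hsq.self_of_nhds
  simp [hv₁, ha, hs] at hderiv

theorem eq_zero_of_forall_vdpPhi_mulVec_eq_zero (ha : a ≠ 0) (hT : 0 < T) (hv₂ : Continuous v₂)
    (hnonconst : ∃ t s : ℝ, (v₁ t, v₂ t) ≠ (v₁ s, v₂ s)) (hper : Function.Periodic v₁ T)
    (hode1 : ∀ t, HasDerivAt v₁ (a * v₂ t) t) {x : Fin 3 → ℝ}
    (hx : ∀ s, vdpPhi (v₁ s, v₂ s) *ᵥ x = 0) : x = 0 := by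
  have hv₁ : Continuous v₁ := continuous_iff_continuousAt.2 fun t => (hode1 t).continuousAt
  have hrow₀ : ∀ s, v₂ s * x 0 = 0 := fun s => by simpa [vdpPhi_mulVec] using congrFun (hx s) 0
  have hrow₁ : ∀ s, -v₁ s * x 1 + (1 - v₁ s ^ 2) * v₂ s * x 2 = 0 := fun s => by
    simpa [vdpPhi_mulVec] using congrFun (hx s) 1
  obtain ⟨s₂, hs₂⟩ := exists_ne_zero_of_hasDerivAt_of_nonconst hode1 hnonconst
  obtain ⟨s₁, hs₁⟩ := exists_ne_zero_of_hasDerivAt ha hode1 hs₂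
  have hx₀ : x 0 = 0 := (mul_eq_zero.1 (hrow₀ s₂)).resolve_left hs₂
  have hx₁ : x 1 = 0 := by
    have hmass : 0 < ∫ s in (0 : ℝ)..0 + T, v₁ s ^ 2 :=
      Function.Periodic.intervalIntegral_pos (fun s => by simp only [hper s]) hT (by fun_prop)
        (fun s => sq_nonneg _) (by positivity : 0 < v₁ s₁ ^ 2) 0
    have hcross : ∫ s in (0 : ℝ)..0 + T, (1 - v₁ s ^ 2) * v₁ s * (a * v₂ s) = 0 :=
      hper.intervalIntegral_comp_mul_deriv_eq_zero (g := fun y => (1 - y ^ 2) * y) hode1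
        (by fun_prop) (by fun_prop) 0
    have hsplit : a * x 1 * ∫ s in (0 : ℝ)..0 + T, v₁ s ^ 2 =
        x 2 * ∫ s in (0 : ℝ)..0 + T, (1 - v₁ s ^ 2) * v₁ s * (a * v₂ s) := by
      simp only [← intervalIntegral.integral_const_mul]
      exact intervalIntegral.integral_congr fun s _ => by
        linear_combination (-a * v₁ s) * hrow₁ s
    rw [hcross, mul_zero] at hsplit
    exact (mul_eq_zero.1 ((mul_eq_zero.1 hsplit).resolve_right hmass.ne')).resolve_left ha
  have hx₂ : x 2 = 0 := by
    by_contra hx₂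
    refine hs₂ (eq_zero_of_one_sub_sq_mul_eq_zero ha hv₂ hode1 (fun s => ?_) s₂)
    simpa [hx₁, hx₂] using hrow₁ s
  ext i
  fin_cases i <;> assumption

end VanDerPol

theorem stmt_13_general (a T : ℝ) (ha : 0 < a) (hT : 0 < T)
    (v₁ v₂ : ℝ → ℝ) (hv₂ : ContDiff ℝ 1 v₂)
    (hnonconst : ∃ t s : ℝ, (v₁ t, v₂ t) ≠ (v₁ s, v₂ s))
    (hper : ∀ t, v₁ (t + T) = v₁ t ∧ v₂ (t + T) = v₂ t)
    (hode1 : ∀ t, HasDerivAt v₁ (a * v₂ t) t) :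
    (∀ t : ℝ,
      (matIntegral (fun s => (vdpPhi (v₁ s, v₂ s))ᵀ * vdpPhi (v₁ s, v₂ s)) t (t + T)).PosDef)
    ∧ PersistentlyExciting (fun s => (vdpPhi (v₁ s, v₂ s))ᵀ) := by
  have hv₁ : Continuous v₁ := continuous_iff_continuousAt.2 fun t => (hode1 t).continuousAt
  have hA : Continuous fun s => vdpPhi (v₁ s, v₂ s) :=
    continuous_vdpPhi.comp (hv₁.prodMk hv₂.continuous)
  have hperA : Function.Periodic (fun s => vdpPhi (v₁ s, v₂ s)) T := fun s => by
    simp only [(hper s).1, (hper s).2]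
  have hPD := posDef_matIntegral_transpose_mul_self hT hA hperA fun x hx => by
    by_contra! h
    exact hx (eq_zero_of_forall_vdpPhi_mulVec_eq_zero ha.ne' hT hv₂.continuous hnonconst
      (fun s => (hper s).1) hode1 h)
  refine ⟨hPD, PersistentlyExciting.of_periodic hT (fun s => by simp only [hperA s]) ?_⟩
  simpa only [transpose_transpose, zero_add] using hPD 0

/-- for a non-constant `T`-periodic `C¹` solution of the Van der Pol
oscillator `v₁' = a v₂`, `v₂' = −b v₁ + c(1 − v₁²)v₂` with `a, b, c > 0`, the matrix
`∫_t^{t+T} φ(v(s))ᵀ φ(v(s)) ds` is positive definite for every `t`; consequently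
`s ↦ φ(v(s))ᵀ` is persistently exciting. -/
theorem stmt_13 (a b c T : ℝ) (ha : 0 < a) (hb : 0 < b) (hc : 0 < c) (hT : 0 < T)
    (v₁ v₂ : ℝ → ℝ) (hv₁ : ContDiff ℝ 1 v₁) (hv₂ : ContDiff ℝ 1 v₂)
    (hnonconst : ∃ t s : ℝ, (v₁ t, v₂ t) ≠ (v₁ s, v₂ s))
    (hper : ∀ t, v₁ (t + T) = v₁ t ∧ v₂ (t + T) = v₂ t)
    (hode1 : ∀ t, HasDerivAt v₁ (a * v₂ t) t)
    (hode2 : ∀ t, HasDerivAt v₂ (-b * v₁ t + c * (1 - v₁ t ^ 2) * v₂ t) t) :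
    (∀ t : ℝ,
      (matIntegral (fun s => (vdpPhi (v₁ s, v₂ s))ᵀ * vdpPhi (v₁ s, v₂ s)) t (t + T)).PosDef)
    ∧ PersistentlyExciting (fun s => (vdpPhi (v₁ s, v₂ s))ᵀ) :=
  stmt_13_general a T ha hT v₁ v₂ hv₂ hnonconst hper hode1
end

section
/- Let N ≥ 1 and let G be a connected simple graph on the vertex set {1, …, N+1}, with Laplacian matrix L̄ over ℝ. Then the N×N matrix H obtained from L̄ by deleting the row and column indexed by vertex N+1 is symmetric positive definite. -/
/-!
Extending `x` by zero off the range of `e` turns the quadratic form of a principal submatrix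
`L[e, e]` into that of `L`. For a graph Laplacian the latter is `∑_{i ∼ j} (y i - y j)²`, which
vanishes only on vectors constant on connected components; on a connected graph such a vector is
constant, and it vanishes at the deleted vertex, so it is zero.
-/

open Function

namespace Matrix

variable {ι V R : Type*} [Fintype ι] [Fintype V] [CommSemiring R] {e : ι → V}

theorem extend_zero_dotProduct (he : Injective e) (x : ι → R) (w : V → R) :
    extend e x 0 ⬝ᵥ w = x ⬝ᵥ (w ∘ e) :=
  (Fintype.sum_of_injective e he _ _ (fun v hv => by simp [extend_apply' _ _ _ hv])
    fun k => by simp [he.extend_apply]).symm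

theorem mulVec_extend_zero (he : Injective e) (A : Matrix V V R) (x : ι → R) :
    A *ᵥ extend e x 0 = A.submatrix id e *ᵥ x := by
  ext v
  rw [mulVec, dotProduct_comm, extend_zero_dotProduct he, dotProduct_comm]
  rfl

theorem dotProduct_submatrix_mulVec (he : Injective e) (A : Matrix V V R) (x : ι → R) :
    x ⬝ᵥ (A.submatrix e e *ᵥ x) = extend e x 0 ⬝ᵥ (A *ᵥ extend e x 0) := by
  rw [mulVec_extend_zero he, extend_zero_dotProduct he]
  rfl

end Matrix

namespace SimpleGraph

open Matrix

variable {ι V : Type*} [Fintype ι] [Fintype V] [DecidableEq V] (G : SimpleGraph V)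
  [DecidableRel G.Adj]

theorem posDef_lapMatrix_submatrix (hG : G.Connected) {e : ι → V} (he : Injective e) {v : V}
    (hv : v ∉ Set.range e) : ((G.lapMatrix ℝ).submatrix e e).PosDef := by
  have hL := G.posSemidef_lapMatrix ℝ
  refine .of_dotProduct_mulVec_pos (hL.isHermitian.submatrix e) fun x hx => ?_
  rw [star_trivial, dotProduct_submatrix_mulVec he]
  have hnonneg : 0 ≤ extend e x 0 ⬝ᵥ (G.lapMatrix ℝ *ᵥ extend e x 0) := by
    simpa using hL.dotProduct_mulVec_nonneg (extend e x 0)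
  refine hnonneg.lt_of_ne' fun h => hx ?_
  rw [← toLinearMap₂'_apply', lapMatrix_toLinearMap₂'_apply'_eq_zero_iff_forall_reachable] at h
  ext k
  simpa [he.extend_apply, extend_apply' _ _ _ hv] using h (e k) v (hG.preconnected _ _)

end SimpleGraph

theorem stmt_16_general (N : ℕ)
    (G : SimpleGraph (Fin (N + 1))) [DecidableRel G.Adj] (hG : G.Connected) :
    ((G.lapMatrix ℝ).submatrix Fin.castSucc Fin.castSucc).IsSymm ∧
      ((G.lapMatrix ℝ).submatrix Fin.castSucc Fin.castSucc).PosDef :=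
  ⟨(G.isSymm_lapMatrix ℝ).submatrix _,
    G.posDef_lapMatrix_submatrix hG (Fin.castSucc_injective N) (v := Fin.last N) (by simp)⟩

/-- for a connected simple graph on `{1, …, N+1}` with Laplacian matrix
`L̄` over `ℝ`, the `N×N` matrix `H` obtained from `L̄` by deleting the row and column of
vertex `N+1` is symmetric positive definite. -/
theorem stmt_16 (N : ℕ) (hN : 1 ≤ N)
    (G : SimpleGraph (Fin (N + 1))) [DecidableRel G.Adj] (hG : G.Connected) :
    ((G.lapMatrix ℝ).submatrix Fin.castSucc Fin.castSucc).IsSymm ∧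
      ((G.lapMatrix ℝ).submatrix Fin.castSucc Fin.castSucc).PosDef :=
  stmt_16_general N G hG
end

section
/- Let M : [0,∞) → ℝ^{n×n} be C¹ with M(t) symmetric for all t, let C : [0,∞) → ℝ^{n×n} be such that d/dt M(t) − 2C(t) is skew-symmetric for every t, let K ∈ ℝ^{n×n}, let Γ ∈ ℝ^{p×p} be symmetric and invertible, and let Y : [0,∞) → ℝ^{n×p}. Suppose s : [0,∞) → ℝ^n and θ̃ : [0,∞) → ℝ^p are differentiable and satisfy M(t)s'(t) = −C(t)s(t) − K s(t) + Y(t)θ̃(t) and θ̃'(t) = −Γ Y(t)^T s(t) for all t ≥ 0. Then the function V(t) = ½( s(t)^T M(t) s(t) + θ̃(t)^T Γ^{-1} θ̃(t) ) is differentiable with V'(t) = −s(t)^T K s(t) for all t ≥ 0. -/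
/-!
Differentiating `sᵀ M s` gives `sᵀ Ṁ s + 2 sᵀ M ṡ`. After substituting the dynamics, the
Coriolis term `-2 sᵀ C s` cancels `sᵀ Ṁ s`, since the quadratic form of the skew-symmetric
matrix `Ṁ - 2C` vanishes; what is left of `½ d/dt (sᵀ M s)` is `-sᵀ K s + sᵀ Y θ̃`. The
adaptation law makes `½ d/dt (θ̃ᵀ Γ⁻¹ θ̃) = -θ̃ᵀ Yᵀ s`, which cancels the cross term.
-/

open Matrix

section Algebra

variable {ι κ R : Type*} [Fintype ι] [Fintype κ]

theorem Matrix.IsSymm.dotProduct_mulVec_comm [CommSemiring R] {A : Matrix ι ι R}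
    (hA : A.IsSymm) (x y : ι → R) : x ⬝ᵥ A *ᵥ y = y ⬝ᵥ A *ᵥ x := by
  rw [dotProduct_mulVec, ← mulVec_transpose, hA.eq, dotProduct_comm]

theorem Matrix.dotProduct_transpose_mulVec_comm [CommSemiring R] (A : Matrix ι κ R)
    (x : κ → R) (y : ι → R) : x ⬝ᵥ Aᵀ *ᵥ y = y ⬝ᵥ A *ᵥ x := by
  rw [mulVec_transpose, dotProduct_comm, ← dotProduct_mulVec]

theorem Matrix.dotProduct_mulVec_self_eq_zero_of_transpose_eq_neg [CommRing R]
    [NoZeroDivisors R] [CharZero R] {A : Matrix ι ι R} (hA : Aᵀ = -A) (x : ι → R) :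
    x ⬝ᵥ A *ᵥ x = 0 := by
  have h := dotProduct_transpose_mulVec_comm A x x
  rw [hA, neg_mulVec, dotProduct_neg, neg_eq_iff_add_eq_zero] at h
  exact add_self_eq_zero.1 h

end Algebra

section Calculus

variable {ι κ 𝕜 : Type*} [NontriviallyNormedField 𝕜] {t : 𝕜}

theorem HasDerivAt.dotProduct [Fintype ι] {f g : 𝕜 → ι → 𝕜} {f' g' : ι → 𝕜}
    (hf : HasDerivAt f f' t) (hg : HasDerivAt g g' t) :
    HasDerivAt (fun u => f u ⬝ᵥ g u) (f' ⬝ᵥ g t + f t ⬝ᵥ g') t :=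
  (HasDerivAt.fun_sum fun i _ => (hasDerivAt_pi.1 hf i).mul (hasDerivAt_pi.1 hg i)).congr_deriv
    Finset.sum_add_distrib

theorem HasDerivAt.mulVec [Fintype κ] {A : 𝕜 → Matrix ι κ 𝕜} {A' : Matrix ι κ 𝕜}
    {g : 𝕜 → κ → 𝕜} {g' : κ → 𝕜} (hA : ∀ i j, HasDerivAt (fun u => A u i j) (A' i j) t)
    (hg : HasDerivAt g g' t) :
    HasDerivAt (fun u => A u *ᵥ g u) (A' *ᵥ g t + A t *ᵥ g') t :=
  hasDerivAt_pi.2 fun i => (hasDerivAt_pi.2 (hA i)).dotProduct hg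

theorem HasDerivAt.dotProduct_mulVec_self [Fintype ι] {A : 𝕜 → Matrix ι ι 𝕜}
    {A' : Matrix ι ι 𝕜} {x : 𝕜 → ι → 𝕜} {x' : ι → 𝕜}
    (hA : ∀ i j, HasDerivAt (fun u => A u i j) (A' i j) t)
    (hAt : (A t).IsSymm) (hx : HasDerivAt x x' t) :
    HasDerivAt (fun u => x u ⬝ᵥ A u *ᵥ x u)
      (x t ⬝ᵥ A' *ᵥ x t + 2 * (x t ⬝ᵥ A t *ᵥ x')) t := by
  convert hx.dotProduct (HasDerivAt.mulVec hA hx) using 1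
  rw [hAt.dotProduct_mulVec_comm x' (x t), dotProduct_add]
  ring

end Calculus


section Lyapunov

variable {ι 𝕜 : Type*} [Fintype ι] [NontriviallyNormedField 𝕜] [CharZero 𝕜] {t : 𝕜}

theorem HasDerivAt.half_dotProduct_mulVec_self_of_skew {M : 𝕜 → Matrix ι ι 𝕜}
    {M' C : Matrix ι ι 𝕜} {s : 𝕜 → ι → 𝕜} {s' f : ι → 𝕜}
    (hM : ∀ i j, HasDerivAt (fun u => M u i j) (M' i j) t) (hMt : (M t).IsSymm)
    (hskew : (M' - (2 : 𝕜) • C)ᵀ = -(M' - (2 : 𝕜) • C)) (hs : HasDerivAt s s' t)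
    (hdyn : M t *ᵥ s' = -(C *ᵥ s t) + f) :
    HasDerivAt (fun u => (1 / 2 : 𝕜) * (s u ⬝ᵥ M u *ᵥ s u)) (s t ⬝ᵥ f) t := by
  have hpassive : s t ⬝ᵥ M' *ᵥ s t = 2 * (s t ⬝ᵥ C *ᵥ s t) := by
    have h := dotProduct_mulVec_self_eq_zero_of_transpose_eq_neg hskew (s t)
    rwa [sub_mulVec, dotProduct_sub, smul_mulVec, dotProduct_smul, smul_eq_mul,
      sub_eq_zero] at h
  refine ((hs.dotProduct_mulVec_self hM hMt).const_mul _).congr_deriv ?_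
  rw [hdyn, hpassive, dotProduct_add, dotProduct_neg]
  ring

theorem HasDerivAt.half_dotProduct_inv_mulVec_self [DecidableEq ι] {Γ : Matrix ι ι 𝕜}
    (hΓs : Γ.IsSymm) (hΓu : IsUnit Γ) {θ : 𝕜 → ι → 𝕜} {w : ι → 𝕜}
    (hθ : HasDerivAt θ (-(Γ *ᵥ w)) t) :
    HasDerivAt (fun u => (1 / 2 : 𝕜) * (θ u ⬝ᵥ Γ⁻¹ *ᵥ θ u)) (-(θ t ⬝ᵥ w)) t := by
  have hconst : ∀ i j, HasDerivAt (fun _ => Γ⁻¹ i j) ((0 : Matrix ι ι 𝕜) i j) t :=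
    fun i j => hasDerivAt_const t _
  refine ((hθ.dotProduct_mulVec_self hconst hΓs.inv).const_mul _).congr_deriv ?_
  rw [mulVec_neg, mulVec_mulVec, nonsing_inv_mul Γ ((isUnit_iff_isUnit_det Γ).1 hΓu),
    one_mulVec, zero_mulVec, dotProduct_zero, dotProduct_neg]
  ring

end Lyapunov

/-- Lyapunov derivative computation for the adaptive Euler–Lagrange error
dynamics: with `M(t)` symmetric and `C¹`, `Ṁ − 2C` skew-symmetric, `Γ` symmetric
invertible, and `s`, `θ̃` differentiable with `M s' = −Cs − Ks + Yθ̃`, `θ̃' = −ΓYᵀs`,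
the function `V = ½(sᵀ M s + θ̃ᵀ Γ⁻¹ θ̃)` satisfies `V' = −sᵀ K s` for all `t ≥ 0`. -/
theorem stmt_17 (n p : ℕ)
    (M M' : ℝ → Matrix (Fin n) (Fin n) ℝ)
    (hM' : ∀ t, 0 ≤ t → ∀ i j, HasDerivAt (fun u => M u i j) (M' t i j) t)
    (hMsymm : ∀ t, (M t).IsSymm)
    (C : ℝ → Matrix (Fin n) (Fin n) ℝ)
    (hskew : ∀ t, 0 ≤ t →
      (M' t - (2 : ℝ) • C t)ᵀ = -(M' t - (2 : ℝ) • C t))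
    (K : Matrix (Fin n) (Fin n) ℝ)
    (Γ : Matrix (Fin p) (Fin p) ℝ) (hΓs : Γ.IsSymm) (hΓu : IsUnit Γ)
    (Y : ℝ → Matrix (Fin n) (Fin p) ℝ)
    (s s' : ℝ → Fin n → ℝ) (θ θ' : ℝ → Fin p → ℝ)
    (hs : ∀ t, 0 ≤ t → HasDerivAt s (s' t) t)
    (hθ : ∀ t, 0 ≤ t → HasDerivAt θ (θ' t) t)
    (heq1 : ∀ t, 0 ≤ t →
      (M t).mulVec (s' t) = -(C t).mulVec (s t) - K.mulVec (s t) + (Y t).mulVec (θ t))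
    (heq2 : ∀ t, 0 ≤ t → θ' t = -(Γ.mulVec ((Y t)ᵀ.mulVec (s t)))) :
    ∀ t, 0 ≤ t →
      HasDerivAt
        (fun u => (1 / 2 : ℝ) * (s u ⬝ᵥ (M u).mulVec (s u) + θ u ⬝ᵥ Γ⁻¹.mulVec (θ u)))
        (-(s t ⬝ᵥ K.mulVec (s t))) t := by
  intro t ht
  have hdyn : M t *ᵥ s' t = -(C t *ᵥ s t) + (-(K *ᵥ s t) + Y t *ᵥ θ t) := by
    rw [heq1 t ht]
    abel
  have hkinetic := (hs t ht).half_dotProduct_mulVec_self_of_skew (hM' t ht) (hMsymm t)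
    (hskew t ht) hdyn
  have hadaptive := (heq2 t ht ▸ hθ t ht).half_dotProduct_inv_mulVec_self hΓs hΓu
  refine ((hkinetic.add hadaptive).congr_deriv ?_).congr_of_eventuallyEq
    (Filter.Eventually.of_forall fun u => mul_add _ _ _)
  rw [dotProduct_add, dotProduct_neg, dotProduct_transpose_mulVec_comm]
  ring
end
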